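/- arXiv:2308.02284 — 12 statements merged into one kernel-verified Lean document; each statement's English description precedes it below -/
import Mathlib

section
/- For all real x > 0, the function f(x) = ln(1+x) / ((1+x)^{1/x} · x) is strictly decreasing on (0, ∞), and its limit as x → 0⁺ equals 1/e. -/
/-!
Write `g x = log (1 + x) / x`. Since `exp ((1 / x) * log (1 + x)) = exp (g x)`, the function
is `h (g x)` with `h t = t * exp (-t)`. By concavity of `log`, `g` is a strictly decreasing slope
of `log` at `1`, with values `≤ 1` because `log y ≤ y - 1`; and `h` is strictly increasing on
`(-∞, 1]`, since `h' t = (1 - t) * exp (-t) > 0` for `t < 1`. As `x → 0⁺`, `g x → log' 1 = 1`,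
so the function tends to `h 1 = 1 / e`.
-/

open Real Filter Set Topology

theorem strictAntiOn_log_one_add_div : StrictAntiOn (fun x : ℝ => log (1 + x) / x) (Ioi 0) := by
  rintro a (ha : 0 < a) b (hb : 0 < b) hab
  have hslope := strictConcaveOn_log_Ioi.secant_strict_mono (mem_Ioi.2 one_pos)
    (mem_Ioi.2 (by linarith : (0 : ℝ) < 1 + a)) (mem_Ioi.2 (by linarith : (0 : ℝ) < 1 + b))
    (by linarith) (by linarith) (by linarith)
  simpa only [log_one, sub_zero, add_sub_cancel_left] using hslope

theorem log_one_add_div_le_one {x : ℝ} (hx : 0 ≤ x) : log (1 + x) / x ≤ 1 :=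
  div_le_one_of_le₀ (by linarith [log_le_sub_one_of_pos (by linarith : (0 : ℝ) < 1 + x)]) hx

theorem tendsto_log_one_add_div_nhdsGT_zero :
    Tendsto (fun x : ℝ => log (1 + x) / x) (𝓝[>] 0) (𝓝 1) := by
  have hderiv : HasDerivAt log 1 1 := by simpa using hasDerivAt_log one_ne_zero
  rw [hasDerivAt_iff_tendsto_slope_zero] at hderiv
  refine (hderiv.mono_left (nhdsWithin_mono 0 fun x hx => ne_of_gt hx)).congr fun x => ?_
  simp only [log_one, sub_zero, smul_eq_mul, div_eq_inv_mul]

theorem strictMonoOn_mul_exp_neg : StrictMonoOn (fun t : ℝ => t * exp (-t)) (Iic 1) := by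
  have hderiv (t : ℝ) : HasDerivAt (fun s : ℝ => s * exp (-s)) ((1 - t) * exp (-t)) t :=
    ((hasDerivAt_id' t).fun_mul (hasDerivAt_neg t).exp).congr_deriv (by ring)
  refine strictMonoOn_of_deriv_pos (convex_Iic 1) (by fun_prop) fun t ht => ?_
  rw [interior_Iic, mem_Iio] at ht
  rw [(hderiv t).deriv]
  exact mul_pos (by linarith) (exp_pos _)

theorem log_one_add_div_exp_mul_eq (x : ℝ) :
    log (1 + x) / (exp ((1 / x) * log (1 + x)) * x) =
      log (1 + x) / x * exp (-(log (1 + x) / x)) := by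
  rw [one_div_mul_eq_div, exp_neg, mul_comm, ← div_div, div_eq_mul_inv]

theorem stmt_0 :
    StrictAntiOn (fun x : ℝ => Real.log (1 + x) / (Real.exp ((1 / x) * Real.log (1 + x)) * x))
      (Set.Ioi 0) ∧
    Filter.Tendsto (fun x : ℝ => Real.log (1 + x) / (Real.exp ((1 / x) * Real.log (1 + x)) * x))
      (nhdsWithin 0 (Set.Ioi 0)) (nhds (1 / Real.exp 1)) := by
  have hcomp : (fun x : ℝ => log (1 + x) / (exp ((1 / x) * log (1 + x)) * x)) =
      (fun t : ℝ => t * exp (-t)) ∘ fun x : ℝ => log (1 + x) / x :=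
    funext log_one_add_div_exp_mul_eq
  rw [hcomp]
  constructor
  · exact strictMonoOn_mul_exp_neg.comp_strictAntiOn strictAntiOn_log_one_add_div
      fun x hx => log_one_add_div_le_one (le_of_lt hx)
  · have hlim : Tendsto (fun t : ℝ => t * exp (-t)) (𝓝 1) (𝓝 (1 * exp (-1))) :=
      (by fun_prop : Continuous fun t : ℝ => t * exp (-t)).tendsto 1
    rw [one_mul, exp_neg, ← one_div] at hlim
    exact hlim.comp tendsto_log_one_add_div_nhdsGT_zero
end

section
/- For all real x > 0 and all natural numbers n ≥ 1, the inequality (e · ln(1+x) / ((1+x)^{1/x} · x))^n < 1 holds. -/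
theorem stmt_1 (x : ℝ) (hx : 0 < x) (n : ℕ) (hn : 1 ≤ n) :
    (Real.exp 1 * Real.log (1 + x) / (Real.exp ((1 / x) * Real.log (1 + x)) * x)) ^ n < 1 := by
  have hlogpos : 0 < Real.log (1 + x) := Real.log_pos (by linarith)
  have hloglt : Real.log (1 + x) < x :=
    Real.log_lt_sub_one_of_pos (by linarith) (by linarith) |>.trans_eq (by ring)
  set t : ℝ := (1 / x) * Real.log (1 + x) with ht
  have htpos : 0 < t := by positivity
  have htlt : t < 1 := by
    rw [ht, one_div, inv_mul_lt_iff₀ hx, mul_one]; exact hloglt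
  have hkey : Real.exp 1 * t < Real.exp t := by
    have := Real.add_one_lt_exp (x := t - 1) (by linarith)
    have h2 : t < Real.exp (t - 1) := by linarith
    calc Real.exp 1 * t < Real.exp 1 * Real.exp (t - 1) := by
          exact mul_lt_mul_of_pos_left h2 (Real.exp_pos 1)
      _ = Real.exp t := by rw [← Real.exp_add]; ring_nf
  have hnum : Real.exp 1 * Real.log (1 + x) < Real.exp t * x := by
    have : Real.log (1 + x) = t * x := by
      rw [ht]; field_simp
    rw [this]
    calc Real.exp 1 * (t * x) = (Real.exp 1 * t) * x := by ring
      _ < Real.exp t * x := mul_lt_mul_of_pos_right hkey hx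
  have hbase : Real.exp 1 * Real.log (1 + x) / (Real.exp t * x) < 1 :=
    (div_lt_one (by positivity)).2 hnum
  have hbase0 : 0 ≤ Real.exp 1 * Real.log (1 + x) / (Real.exp t * x) := by positivity
  exact pow_lt_one₀ hbase0 hbase (by omega)
end

section
/- Fix a natural number n ≥ 1 and set σ² > 0, P > 0. Define g(x) = ∫_{f^l(x)}^{f^u(x)} e^{-t} t^{n-1} dt where f^l(x) = (n/x)·ln(1+x) and f^u(x) = n(1/x + 1)·ln(1+x), for x > 0. Then g(x) ≤ e^{-n} n^n ln(1+x) for all x > 0. -/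
lemma key_pow_exp (n : ℕ) (t : ℝ) (ht : 0 < t) (hn : 1 ≤ n) :
    Real.exp (-t) * t ^ n ≤ Real.exp (-(n : ℝ)) * (n : ℝ) ^ n := by
  have hn0 : (0 : ℝ) < n := by exact_mod_cast hn
  have h1 : Real.log (t / n) ≤ t / n - 1 := Real.log_le_sub_one_of_pos (by positivity)
  rw [Real.log_div (ne_of_gt ht) (ne_of_gt hn0)] at h1
  have h2 : (n : ℝ) * Real.log t - t ≤ (n : ℝ) * Real.log n - n := by
    have h3 := mul_le_mul_of_nonneg_left h1 (le_of_lt hn0)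
    have h4 : (n : ℝ) * (t / n - 1) = t - n := by field_simp
    nlinarith
  have ht' : t ^ n = Real.exp ((n : ℝ) * Real.log t) := by
    rw [Real.exp_nat_mul, Real.exp_log ht]
  have hn' : (n : ℝ) ^ n = Real.exp ((n : ℝ) * Real.log n) := by
    rw [Real.exp_nat_mul, Real.exp_log hn0]
  rw [ht', hn', ← Real.exp_add, ← Real.exp_add]
  exact Real.exp_le_exp.mpr (by linarith)

theorem stmt_2 (n : ℕ) (hn : 1 ≤ n) (σ2 P : ℝ) (hσ : 0 < σ2) (hP : 0 < P) (x : ℝ) (hx : 0 < x) :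
    (∫ t in ((n : ℝ) / x * Real.log (1 + x))..((n : ℝ) * (1 / x + 1) * Real.log (1 + x)),
        Real.exp (-t) * t ^ (n - 1)) ≤
      Real.exp (-(n : ℝ)) * (n : ℝ) ^ n * Real.log (1 + x) := by
  set L := Real.log (1 + x) with hLdef
  have hL : 0 < L := Real.log_pos (by linarith)
  have hn0 : (0 : ℝ) < n := by exact_mod_cast hn
  set a := (n : ℝ) / x * L with hadef
  set b := (n : ℝ) * (1 / x + 1) * L with hbdef
  have ha : 0 < a := by positivity
  have hb : 0 < b := by positivity
  have hab : a ≤ b := by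
    have h : b - a = (n : ℝ) * L := by rw [hadef, hbdef]; ring
    nlinarith [mul_nonneg hn0.le hL.le]
  set C := Real.exp (-(n : ℝ)) * (n : ℝ) ^ n with hCdef
  have hC : 0 < C := by positivity
  have hbound : ∀ t ∈ Set.Icc a b, Real.exp (-t) * t ^ (n - 1) ≤ C * t⁻¹ := by
    intro t htmem
    have ht : 0 < t := lt_of_lt_of_le ha htmem.1
    have hkey := key_pow_exp n t ht hn
    have hpow : t ^ n = t ^ (n - 1) * t := by
      conv_lhs => rw [show n = (n - 1) + 1 by omega]
      rw [pow_succ]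
    rw [hpow] at hkey
    have hfin : Real.exp (-t) * t ^ (n - 1) ≤ C / t := by
      rw [le_div_iff₀ ht, mul_assoc]
      exact hkey
    rwa [div_eq_mul_inv] at hfin
  have hint1 : IntervalIntegrable (fun t => Real.exp (-t) * t ^ (n - 1)) MeasureTheory.volume a b := by
    apply Continuous.intervalIntegrable
    continuity
  have hint2 : IntervalIntegrable (fun t => C * t⁻¹) MeasureTheory.volume a b := by
    apply ContinuousOn.intervalIntegrable
    apply ContinuousOn.mul continuousOn_const
    apply ContinuousOn.inv₀ continuousOn_id
    intro t htmem
    rw [Set.uIcc_of_le hab] at htmem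
    exact ne_of_gt (lt_of_lt_of_le ha htmem.1)
  have hmono := intervalIntegral.integral_mono_on hab hint1 hint2 hbound
  have hcalc : (∫ t in a..b, C * t⁻¹) = C * L := by
    rw [intervalIntegral.integral_const_mul, integral_inv_of_pos ha hb]
    congr 1
    have hx0 : x ≠ 0 := ne_of_gt hx
    have : b / a = 1 + x := by
      rw [hadef, hbdef]
      field_simp
    rw [this]
  calc (∫ t in a..b, Real.exp (-t) * t ^ (n - 1)) ≤ ∫ t in a..b, C * t⁻¹ := hmono
    _ = C * L := hcalc
    _ = Real.exp (-(n : ℝ)) * (n : ℝ) ^ n * L := by rw [hCdef]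
end

section
/- For every natural number n ≥ 1, define ξ^l(x) = max(0, 1 − (e^{-n} n^n / Γ(n)) · ln(1+x)) and ξ(x) = 1 − (1/Γ(n)) ∫_{(n/x)ln(1+x)}^{n(1/x+1)ln(1+x)} e^{-t} t^{n-1} dt for x > 0, where Γ is the Gamma function. Then ξ^l(x) ≤ ξ(x) for all x > 0. -/
open Real MeasureTheory intervalIntegral

-- peak bound
lemma peak (n : ℕ) (hn : 1 ≤ n) {t : ℝ} (ht : 0 < t) :
    Real.exp (-t) * t ^ n ≤ Real.exp (-(n:ℝ)) * (n:ℝ) ^ n := by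
  have hn0 : (0:ℝ) < n := by exact_mod_cast hn
  have h1 : t / n ≤ Real.exp (t / n - 1) := by
    have := Real.add_one_le_exp (t / n - 1)
    linarith
  have h2 : (t / n) ^ n ≤ Real.exp (t / n - 1) ^ n := by
    apply pow_le_pow_left₀ (by positivity) h1
  have h3 : Real.exp (t / n - 1) ^ n = Real.exp (t - n) := by
    rw [← Real.exp_nat_mul]
    congr 1
    field_simp
  have h4 : t ^ n ≤ Real.exp (t - n) * n ^ n := by
    have : (t / n) ^ n * (n:ℝ) ^ n ≤ Real.exp (t - n) * n ^ n := by
      rw [← h3]; exact mul_le_mul_of_nonneg_right h2 (by positivity)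
    calc t ^ n = (t / n) ^ n * (n:ℝ) ^ n := by
          rw [div_pow]; field_simp
      _ ≤ _ := this
  calc Real.exp (-t) * t ^ n ≤ Real.exp (-t) * (Real.exp (t - n) * n ^ n) := by
        exact mul_le_mul_of_nonneg_left h4 (by positivity)
    _ = Real.exp (-(n:ℝ)) * (n:ℝ) ^ n := by
        rw [← mul_assoc, ← Real.exp_add]; ring_nf

theorem stmt_3 (n : ℕ) (hn : 1 ≤ n) (x : ℝ) (hx : 0 < x) :
    max 0 (1 - (Real.exp (-(n : ℝ)) * (n : ℝ) ^ n / Real.Gamma n) * Real.log (1 + x)) ≤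
      1 - (1 / Real.Gamma n) *
        ∫ t in ((n : ℝ) / x * Real.log (1 + x))..((n : ℝ) * (1 / x + 1) * Real.log (1 + x)),
          Real.exp (-t) * t ^ (n - 1) := by
  have hn0 : (0:ℝ) < n := by exact_mod_cast hn
  set L := Real.log (1 + x) with hL
  have hLpos : 0 < L := Real.log_pos (by linarith)
  set a := (n : ℝ) / x * L with ha
  set b := (n : ℝ) * (1 / x + 1) * L with hb
  have hapos : 0 < a := by positivity
  have hab : a ≤ b := by
    have : (n : ℝ) / x ≤ (n:ℝ) * (1/x + 1) := by
      rw [div_eq_mul_inv, one_div]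
      nlinarith [mul_pos hn0 hx]
    exact mul_le_mul_of_nonneg_right this hLpos.le
  have hbpos : 0 < b := lt_of_lt_of_le hapos hab
  have hΓ : 0 < Real.Gamma n := Real.Gamma_pos_of_pos hn0
  set f : ℝ → ℝ := fun t => Real.exp (-t) * t ^ (n - 1) with hf
  -- integrability of f on [a,b]
  have hfc : Continuous f := by continuity
  have hfint : IntervalIntegrable f volume a b := hfc.intervalIntegrable a b
  -- Part A : ∫ f ≤ Γ n
  have hIleΓ : (∫ t in a..b, f t) ≤ Real.Gamma n := by
    have hcast : ((n:ℝ) - 1) = ((n - 1 : ℕ) : ℝ) := by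
      rw [Nat.cast_sub hn, Nat.cast_one]
    have heq1 : (∫ t in a..b, f t) = ∫ t in Set.Ioc a b, f t :=
      intervalIntegral.integral_of_le hab
    have heq2 : (∫ t in Set.Ioc a b, f t)
        = ∫ t in Set.Ioc a b, Real.exp (-t) * t ^ ((n:ℝ) - 1) := by
      apply setIntegral_congr_fun measurableSet_Ioc
      intro t ht
      have ht0 : 0 < t := lt_trans hapos ht.1
      simp only [hf]
      rw [hcast, Real.rpow_natCast]
    have hGint : IntegrableOn (fun t => Real.exp (-t) * t ^ ((n:ℝ) - 1)) (Set.Ioi 0) volume :=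
      Real.GammaIntegral_convergent hn0
    have hle : (∫ t in Set.Ioc a b, Real.exp (-t) * t ^ ((n:ℝ) - 1))
        ≤ ∫ t in Set.Ioi 0, Real.exp (-t) * t ^ ((n:ℝ) - 1) := by
      apply setIntegral_mono_set hGint
      · filter_upwards [ae_restrict_mem measurableSet_Ioi] with t ht
        have : (0:ℝ) < t := ht
        positivity
      · filter_upwards with t ht
        exact lt_trans hapos ht.1
    have hGamma : Real.Gamma n = ∫ t in Set.Ioi 0, Real.exp (-t) * t ^ ((n:ℝ) - 1) :=
      Real.Gamma_eq_integral hn0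
    rw [heq1, heq2, hGamma]
    exact hle
  -- Part B : ∫ f ≤ exp(-n) n^n * L
  have hIleC : (∫ t in a..b, f t) ≤ Real.exp (-(n:ℝ)) * (n:ℝ) ^ n * L := by
    set c : ℝ := Real.exp (-(n:ℝ)) * (n:ℝ) ^ n with hc
    have hgc : ContinuousOn (fun t : ℝ => c * t⁻¹) (Set.uIcc a b) := by
      apply ContinuousOn.mul continuousOn_const
      apply ContinuousOn.inv₀ continuousOn_id
      intro t ht
      rw [Set.uIcc_of_le hab] at ht
      exact ne_of_gt (lt_of_lt_of_le hapos ht.1)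
    have hgint : IntervalIntegrable (fun t : ℝ => c * t⁻¹) volume a b :=
      hgc.intervalIntegrable
    have hmono : (∫ t in a..b, f t) ≤ ∫ t in a..b, c * t⁻¹ := by
      apply intervalIntegral.integral_mono_on hab hfint hgint
      intro t ht
      have ht0 : 0 < t := lt_of_lt_of_le hapos ht.1
      simp only [hf]
      have key : Real.exp (-t) * t ^ n ≤ c := peak n hn ht0
      have hrw : t ^ (n-1) = t ^ n * t⁻¹ := by
        rw [pow_sub₀ t (ne_of_gt ht0) hn, pow_one]
      rw [hrw, ← mul_assoc]
      exact mul_le_mul_of_nonneg_right key (inv_nonneg.mpr ht0.le)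
    have hgval : (∫ t in a..b, c * t⁻¹) = c * L := by
      rw [intervalIntegral.integral_const_mul, integral_inv (by
        rw [Set.uIcc_of_le hab]
        intro h
        exact absurd h.1 (not_le.mpr hapos))]
      congr 1
      rw [hL]
      congr 1
      rw [ha, hb]
      field_simp
    linarith
  -- combine
  have hnn : 0 ≤ ∫ t in a..b, f t := by
    apply intervalIntegral.integral_nonneg hab
    intro t ht
    have : 0 < t := lt_of_lt_of_le hapos ht.1
    positivity
  apply max_le
  · have h1 : (1 / Real.Gamma n) * ∫ t in a..b, f t ≤ (1 / Real.Gamma n) * Real.Gamma n :=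
      mul_le_mul_of_nonneg_left hIleΓ (by positivity)
    have h2 : (1 / Real.Gamma n) * Real.Gamma n = 1 := by field_simp
    linarith
  · have h1 : (1 / Real.Gamma n) * ∫ t in a..b, f t
        ≤ (1 / Real.Gamma n) * (Real.exp (-(n:ℝ)) * (n:ℝ) ^ n * L) :=
      mul_le_mul_of_nonneg_left hIleC (by positivity)
    have h2 : (1 / Real.Gamma n) * (Real.exp (-(n:ℝ)) * (n:ℝ) ^ n * L)
        = Real.exp (-(n:ℝ)) * (n:ℝ) ^ n / Real.Gamma n * L := by ring
    linarith
end

section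
/- The function M₁(n) = Γ(n) / (√(2n) · e^{-n} · n^{n-1}) satisfies M₁(1) = e/√2 > 1, is strictly decreasing in n on [1, ∞) (viewing n as a real variable via the Gamma function), and tends to √π > 1 as n → ∞. Consequently M₁(n) > 1 for all real n ≥ 1. -/
open Real Filter Set


noncomputable def gf (t : ℝ) : ℝ := (t + 1/2) * (Real.log (t+1) - Real.log t) - 1
noncomputable def gf' (t : ℝ) : ℝ := (Real.log (t+1) - Real.log t) - (2*t+1)/(2*t*(t+1))

lemma hasDerivAt_gf {t : ℝ} (ht : 0 < t) : HasDerivAt gf (gf' t) t := by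
  have h1 : HasDerivAt (fun t : ℝ => Real.log (t+1) - Real.log t) (1/(t+1) - 1/t) t := by
    exact (((hasDerivAt_id t).add_const 1).log (by simp; linarith)).sub
      ((hasDerivAt_id t).log (by simpa using ht.ne'))
  have h2 : HasDerivAt (fun t : ℝ => (t + 1/2) * (Real.log (t+1) - Real.log t))
      (1 * (Real.log (t+1) - Real.log t) + (t + 1/2) * (1/(t+1) - 1/t)) t :=
    ((hasDerivAt_id t).add_const (1/2)).mul h1
  have := h2.sub_const 1
  refine this.congr_deriv ?_
  unfold gf'
  field_simp
  ring

lemma hasDerivAt_gf' {t : ℝ} (ht : 0 < t) : HasDerivAt gf' (1/(2*t^2*(t+1)^2)) t := by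
  have h1 : HasDerivAt (fun t : ℝ => Real.log (t+1) - Real.log t) (1/(t+1) - 1/t) t :=
    (((hasDerivAt_id t).add_const 1).log (by simp; linarith)).sub ((hasDerivAt_id t).log (by simpa using ht.ne'))
  have h2 : HasDerivAt (fun t : ℝ => (2*t+1)/(2*t*(t+1)))
      ((2 * (2*t*(t+1)) - (2*t+1) * (2*(t+1) + 2*t)) / (2*t*(t+1))^2) t := by
    have hn : HasDerivAt (fun t : ℝ => 2*t+1) 2 t := by
      simpa using ((hasDerivAt_id t).const_mul 2).add_const 1
    have hd : HasDerivAt (fun t : ℝ => 2*t*(t+1)) (2*(t+1) + 2*t) t := by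
      have := (((hasDerivAt_id t).const_mul 2)).mul ((hasDerivAt_id t).add_const 1)
      refine this.congr_deriv ?_
      change 2 * 1 * (t + 1) + 2 * t * 1 = 2 * (t + 1) + 2 * t
      ring
    exact hn.div hd (by positivity)
  have := h1.sub h2
  refine this.congr_deriv ?_
  field_simp
  ring

lemma gf'_neg {t : ℝ} (ht : 0 < t) : gf' t < 0 := by
  -- gf' is strictly increasing on Ioi 0 and tends to 0
  have hmono : StrictMonoOn gf' (Ioi 0) := by
    apply strictMonoOn_of_deriv_pos (convex_Ioi 0)
    · intro x hx
      exact (hasDerivAt_gf' hx).continuousAt.continuousWithinAt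
    · intro x hx
      rw [interior_Ioi] at hx
      have hx0 : (0:ℝ) < x := hx
      rw [(hasDerivAt_gf' hx0).deriv]
      have : (0:ℝ) < 2*x^2*(x+1)^2 := by positivity
      positivity
  have hlim : Tendsto gf' atTop (nhds 0) := by
    have h1 : Tendsto (fun t : ℝ => Real.log (t+1) - Real.log t) atTop (nhds 0) := by
      have : (fun t : ℝ => Real.log (t+1) - Real.log t) =ᶠ[atTop]
          (fun t : ℝ => Real.log ((t+1)/t)) := by
        filter_upwards [eventually_gt_atTop 0] with t ht
        rw [Real.log_div (by linarith) ht.ne']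
      rw [tendsto_congr' this]
      have : Tendsto (fun t : ℝ => (t+1)/t) atTop (nhds 1) := by
        have : (fun t : ℝ => (t+1)/t) =ᶠ[atTop] (fun t : ℝ => 1 + t⁻¹) := by
          filter_upwards [eventually_gt_atTop 0] with t ht
          field_simp
        rw [tendsto_congr' this]
        have : Tendsto (fun t : ℝ => 1 + t⁻¹) atTop (nhds (1 + 0)) :=
          tendsto_const_nhds.add (tendsto_inv_atTop_zero (𝕜 := ℝ))
        simpa using this
      simpa [Function.comp_def] using (Real.continuousAt_log one_ne_zero).tendsto.comp this
    have h2 : Tendsto (fun t : ℝ => (2*t+1)/(2*t*(t+1))) atTop (nhds 0) := by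
      have hb : Tendsto (fun t : ℝ => t) atTop atTop := tendsto_id
      have : Tendsto (fun t : ℝ => (2*t+1)/(2*t*(t+1))) atTop (nhds 0) := by
        have heq : (fun t : ℝ => (2*t+1)/(2*t*(t+1))) =ᶠ[atTop]
            (fun t : ℝ => (2 + t⁻¹) / (2*(t+1))) := by
          filter_upwards [eventually_gt_atTop 0] with t ht
          field_simp
        rw [tendsto_congr' heq]
        have hnum : Tendsto (fun t : ℝ => 2 + t⁻¹) atTop (nhds (2 + 0)) :=
          tendsto_const_nhds.add (tendsto_inv_atTop_zero (𝕜 := ℝ))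
        have hden : Tendsto (fun t : ℝ => 2*(t+1)) atTop atTop :=
          (tendsto_atTop_add_const_right _ 1 tendsto_id).const_mul_atTop two_pos
        simpa using hnum.div_atTop hden
      exact this
    have := h1.sub h2
    simpa using this.congr (fun t => rfl : ∀ t, _ = gf' t)
  -- conclude gf' t < 0
  have h1 : gf' t < gf' (t+1) := hmono (mem_Ioi.2 ht) (mem_Ioi.2 (by linarith)) (by linarith)
  have h2 : gf' (t+1) ≤ 0 := by
    apply ge_of_tendsto (f := gf') hlim
    filter_upwards [eventually_ge_atTop (t+1)] with s hs
    rcases eq_or_lt_of_le hs with h | h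
    · exact (congrArg gf' h.symm).ge
    · exact (hmono (mem_Ioi.2 (by linarith)) (mem_Ioi.2 (by linarith)) h).le
  linarith

lemma gf_strictAnti : StrictAntiOn gf (Ioi 0) := by
  apply strictAntiOn_of_deriv_neg (convex_Ioi 0)
  · intro x hx
    exact (hasDerivAt_gf hx).continuousAt.continuousWithinAt
  · intro x hx
    rw [interior_Ioi] at hx
    rw [(hasDerivAt_gf hx).deriv]
    exact gf'_neg hx

lemma gf_tendsto_zero : Tendsto gf atTop (nhds 0) := by
  have h1 : Tendsto (fun t : ℝ => t * Real.log (1 + 1/t)) atTop (nhds 1) := by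
    simpa using Real.tendsto_mul_log_one_add_div_atTop 1
  have heq : gf =ᶠ[atTop] (fun t : ℝ => t * Real.log (1 + 1/t)
      + (1/2) * Real.log (1 + 1/t) - 1) := by
    filter_upwards [eventually_gt_atTop 0] with t ht
    have h : Real.log (t+1) - Real.log t = Real.log (1 + 1/t) := by
      rw [← Real.log_div (by linarith) ht.ne']
      congr 1
      field_simp
    unfold gf
    rw [h]; ring
  rw [tendsto_congr' heq]
  have h2 : Tendsto (fun t : ℝ => Real.log (1 + 1/t)) atTop (nhds 0) := by
    have : Tendsto (fun t : ℝ => 1 + 1/t) atTop (nhds 1) := by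
      have : Tendsto (fun t : ℝ => 1 + t⁻¹) atTop (nhds (1 + 0)) :=
        tendsto_const_nhds.add (tendsto_inv_atTop_zero (𝕜 := ℝ))
      simpa [one_div] using this
    simpa [Function.comp_def] using (Real.continuousAt_log one_ne_zero).tendsto.comp this
  have := (h1.add (h2.const_mul (1/2 : ℝ))).sub_const 1
  simpa using this

lemma gf_pos {t : ℝ} (ht : 0 < t) : 0 < gf t := by
  have h1 : gf (t+1) < gf t := gf_strictAnti (mem_Ioi.2 ht) (mem_Ioi.2 (by linarith)) (by linarith)
  have h2 : 0 ≤ gf (t+1) := by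
    apply le_of_tendsto (f := gf) gf_tendsto_zero
    filter_upwards [eventually_ge_atTop (t+1)] with s hs
    rcases eq_or_lt_of_le hs with h | h
    · exact (congrArg gf h).ge
    · exact (gf_strictAnti (mem_Ioi.2 (by linarith)) (mem_Ioi.2 (by linarith)) h).le
  linarith

lemma gf_lt {t : ℝ} (ht : 0 < t) : gf t < 1/(4*t*(t+1)) := by
  have h := gf'_neg ht
  unfold gf' at h
  unfold gf
  have ht1 : (0:ℝ) < t + 1 := by linarith
  have hlog : Real.log (t+1) - Real.log t < (2*t+1)/(2*t*(t+1)) := by linarith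
  have hmul : (t + 1/2) * (Real.log (t+1) - Real.log t)
      < (t + 1/2) * ((2*t+1)/(2*t*(t+1))) := by
    apply mul_lt_mul_of_pos_left hlog (by linarith)
  have heq : (t + 1/2) * ((2*t+1)/(2*t*(t+1))) - 1 = 1/(4*t*(t+1)) := by
    field_simp
    ring
  linarith

noncomputable def mu (x : ℝ) : ℝ := ∑' k : ℕ, gf (x + k)

lemma sum_gf_le {x : ℝ} (hx : 0 < x) (n : ℕ) :
    ∑ k ∈ Finset.range n, gf (x + k) ≤ 1/(4*x) := by
  have hle : ∀ k : ℕ, gf (x + k) ≤ 1/(4*(x+k)) - 1/(4*(x+k+1)) := by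
    intro k
    have hxk : (0:ℝ) < x + k := by positivity
    have h := gf_lt hxk
    have : 1/(4*(x+k)*((x+k)+1)) = 1/(4*(x+k)) - 1/(4*(x+k+1)) := by
      field_simp
      ring
    linarith
  calc ∑ k ∈ Finset.range n, gf (x + k)
      ≤ ∑ k ∈ Finset.range n, (1/(4*(x+k)) - 1/(4*(x+k+1))) :=
        Finset.sum_le_sum (fun k _ => hle k)
    _ = 1/(4*(x+(0:ℕ))) - 1/(4*(x+n)) := by
        have := Finset.sum_range_sub' (fun k : ℕ => 1/(4*(x+k))) n
        simp only [Nat.cast_add, Nat.cast_one] at this ⊢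
        rw [← this]
        apply Finset.sum_congr rfl
        intro k _
        push_cast
        ring_nf
    _ ≤ 1/(4*x) := by
        have hxn : (0:ℝ) < x + n := by positivity
        have : 0 ≤ 1/(4*(x+n)) := by positivity
        simp only [Nat.cast_zero, add_zero]
        linarith

lemma summable_gf {x : ℝ} (hx : 0 < x) : Summable (fun k : ℕ => gf (x + k)) :=
  summable_of_sum_range_le (fun k => (gf_pos (by positivity)).le) (sum_gf_le hx)

lemma mu_pos {x : ℝ} (hx : 0 < x) : 0 < mu x :=
  Summable.tsum_pos (summable_gf hx) (fun k => (gf_pos (by positivity)).le) 0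
    (gf_pos (by positivity))

lemma mu_le {x : ℝ} (hx : 0 < x) : mu x ≤ 1/(4*x) :=
  Real.tsum_le_of_sum_range_le (fun k => (gf_pos (by positivity)).le) (sum_gf_le hx)

lemma mu_rec {x : ℝ} (hx : 0 < x) : mu x = gf x + mu (x+1) := by
  have h := Summable.tsum_eq_zero_add (summable_gf hx)
  simp only [Nat.cast_zero, add_zero] at h
  rw [mu, h]
  congr 1
  rw [mu]
  apply tsum_congr
  intro k
  push_cast
  ring_nf

lemma mu_strictAnti : StrictAntiOn mu (Ioi 0) := by
  intro x hx y hy hxy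
  have hx0 : (0:ℝ) < x := hx
  have hy0 : (0:ℝ) < y := hy
  apply Summable.tsum_lt_tsum (i := 0)
  · intro k
    exact (gf_strictAnti (mem_Ioi.2 (by positivity)) (mem_Ioi.2 (by positivity))
      (by linarith [Nat.cast_nonneg (α := ℝ) k])).le
  · exact gf_strictAnti (mem_Ioi.2 (by simpa using hx0)) (mem_Ioi.2 (by simpa using hy0))
      (by simpa using hxy)
  · exact summable_gf hy0
  · exact summable_gf hx0

lemma gf_convexOn : ConvexOn ℝ (Ioi 0) gf := by
  apply convexOn_of_hasDerivWithinAt2_nonneg (f' := gf')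
    (f'' := fun t => 1/(2*t^2*(t+1)^2)) (convex_Ioi 0)
  · intro x hx
    exact (hasDerivAt_gf hx).continuousAt.continuousWithinAt
  · intro x hx
    rw [interior_Ioi] at hx
    exact (hasDerivAt_gf hx).hasDerivWithinAt
  · intro x hx
    rw [interior_Ioi] at hx
    exact (hasDerivAt_gf' hx).hasDerivWithinAt
  · intro x hx
    rw [interior_Ioi] at hx
    have hx0 : (0:ℝ) < x := hx
    positivity

lemma mu_convexOn : ConvexOn ℝ (Ioi 0) mu := by
  refine ⟨convex_Ioi 0, ?_⟩
  intro x hx y hy a b ha hb hab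
  have hx0 : (0:ℝ) < x := hx
  have hy0 : (0:ℝ) < y := hy
  have hxy : (0:ℝ) < a*x + b*y := by
    rcases eq_or_lt_of_le ha with h | h
    · simp [← h] at hab ⊢; nlinarith
    · nlinarith
  have key : ∀ k : ℕ, gf ((a*x + b*y) + k) ≤ a * gf (x+k) + b * gf (y+k) := by
    intro k
    have := gf_convexOn.2 (mem_Ioi.2 (show (0:ℝ) < x + k by positivity))
      (mem_Ioi.2 (show (0:ℝ) < y + k by positivity)) ha hb hab
    have heq : a • (x + k) + b • (y + k) = (a*x + b*y) + k := by
      simp only [smul_eq_mul]; nlinarith [hab]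
    rw [heq] at this
    simpa using this
  have hsum : Summable (fun k : ℕ => a * gf (x+k) + b * gf (y+k)) :=
    ((summable_gf hx0).mul_left a).add ((summable_gf hy0).mul_left b)
  calc mu (a*x + b*y) ≤ ∑' k : ℕ, (a * gf (x+k) + b * gf (y+k)) :=
        Summable.tsum_le_tsum key (summable_gf hxy) hsum
    _ = a * mu x + b * mu y := by
        rw [Summable.tsum_add ((summable_gf hx0).mul_left a) ((summable_gf hy0).mul_left b),
          tsum_mul_left, tsum_mul_left]
        rfl
  
noncomputable def hf (x : ℝ) : ℝ := (x - 1/2) * Real.log x - x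

lemma hasDerivAt_hf {x : ℝ} (hx : 0 < x) :
    HasDerivAt hf (Real.log x + (x - 1/2)/x - 1) x := by
  have h1 : HasDerivAt (fun x : ℝ => (x - 1/2) * Real.log x)
      (1 * Real.log x + (x - 1/2) * (1/x)) x := by
    exact ((hasDerivAt_id x).sub_const (1/2)).mul
      (by simpa [one_div] using (Real.hasDerivAt_log hx.ne'))
  have := h1.sub (hasDerivAt_id x)
  refine this.congr_deriv ?_
  field_simp

lemma hf_convexOn : ConvexOn ℝ (Ioi 0) hf := by
  apply convexOn_of_hasDerivWithinAt2_nonneg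
    (f' := fun x => Real.log x + (x - 1/2)/x - 1)
    (f'' := fun x => 1/x + 1/(2*x^2)) (convex_Ioi 0)
  · intro x hx
    exact (hasDerivAt_hf hx).continuousAt.continuousWithinAt
  · intro x hx
    rw [interior_Ioi] at hx
    exact (hasDerivAt_hf hx).hasDerivWithinAt
  · intro x hx
    rw [interior_Ioi] at hx
    have hx0 : (0:ℝ) < x := hx
    have h1 : HasDerivAt (fun x : ℝ => Real.log x + (x - 1/2)/x - 1)
        (1/x + (1 * x - (x - 1/2) * 1)/x^2) x := by
      exact (((by simpa [one_div] using Real.hasDerivAt_log hx0.ne' :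
        HasDerivAt Real.log (1/x) x)).add
        (((hasDerivAt_id x).sub_const (1/2)).div (hasDerivAt_id x) hx0.ne')).sub_const 1
    have heq : 1/x + (1 * x - (x - 1/2) * 1)/x^2 = 1/x + 1/(2*x^2) := by
      field_simp
      ring
    rw [heq] at h1
    exact h1.hasDerivWithinAt
  · intro x hx
    rw [interior_Ioi] at hx
    have hx0 : (0:ℝ) < x := hx
    positivity

noncomputable def Fc (x : ℝ) : ℝ := Real.exp (hf x + mu x + (1 - mu 1))

lemma hf_gf (y : ℝ) : hf (y+1) = hf y + Real.log y + gf y := by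
  unfold hf gf
  ring

lemma Fc_eq_Gamma : Set.EqOn Fc Real.Gamma (Ioi (0:ℝ)) := by
  apply Real.eq_Gamma_of_log_convex
  · have heq : (Real.log ∘ Fc) = fun x => hf x + mu x + (1 - mu 1) :=
      funext fun x => Real.log_exp _
    rw [heq]
    exact (hf_convexOn.add mu_convexOn).add (convexOn_const _ (convex_Ioi 0))
  · intro y hy
    unfold Fc
    have h : hf (y+1) + mu (y+1) + (1 - mu 1) =
        Real.log y + (hf y + mu y + (1 - mu 1)) := by
      rw [hf_gf y, mu_rec hy]; ring
    rw [h, Real.exp_add, Real.exp_log hy]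
  · intro y _
    exact Real.exp_pos _
  · unfold Fc
    rw [show hf 1 + mu 1 + (1 - mu 1) = 0 by unfold hf; simp]
    exact Real.exp_zero

lemma Gamma_formula {x : ℝ} (hx : 0 < x) :
    Real.Gamma x = Real.exp (hf x + mu x + (1 - mu 1)) :=
  (Fc_eq_Gamma (mem_Ioi.2 hx)).symm

lemma M_eq {x : ℝ} (hx : 0 < x) :
    Real.Gamma x / (Real.sqrt (2 * x) * Real.exp (-x) * x ^ (x - 1)) =
      Real.exp (mu x + (1 - mu 1)) / Real.sqrt 2 := by
  have hsx : Real.sqrt x = Real.exp (Real.log x * (1/2)) := by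
    rw [Real.sqrt_eq_rpow, Real.rpow_def_of_pos hx]
  have hxp : x ^ (x-1) = Real.exp (Real.log x * (x-1)) := Real.rpow_def_of_pos hx _
  have hden : Real.sqrt (2 * x) * Real.exp (-x) * x ^ (x - 1) =
      Real.sqrt 2 * Real.exp (hf x) := by
    rw [Real.sqrt_mul (by norm_num) x, hsx, hxp]
    have : Real.exp (Real.log x * (1/2)) * Real.exp (-x) * Real.exp (Real.log x * (x-1)) =
        Real.exp (hf x) := by
      rw [← Real.exp_add, ← Real.exp_add]
      congr 1
      unfold hf
      ring
    rw [← this]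
    ring
  rw [hden, Gamma_formula hx, Real.exp_add, Real.exp_add]
  rw [Real.exp_add (mu x)]
  field_simp

lemma M_nat (n : ℕ) (hn : 1 ≤ n) :
    Real.Gamma n / (Real.sqrt (2 * n) * Real.exp (-(n:ℝ)) * (n:ℝ) ^ ((n:ℝ) - 1)) =
      Stirling.stirlingSeq n := by
  obtain ⟨m, rfl⟩ := Nat.exists_eq_add_of_le hn
  rw [Nat.add_comm 1 m]
  have hc : ((m + 1 : ℕ) : ℝ) = (m:ℝ) + 1 := by push_cast; ring
  rw [hc]
  rw [show (m:ℝ) + 1 = ((m:ℕ):ℝ) + 1 from rfl, Real.Gamma_nat_eq_factorial]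
  rw [Stirling.stirlingSeq]
  have h1 : ((m:ℝ)+1) ^ (((m:ℝ)+1) - 1) = ((m:ℝ)+1)^(m:ℕ) := by
    rw [show ((m:ℝ)+1) - 1 = ((m:ℕ):ℝ) by push_cast; ring, Real.rpow_natCast]
  rw [h1]
  have h2 : Real.exp (-((m:ℝ)+1)) = (Real.exp 1 ^ (m+1:ℕ))⁻¹ := by
    rw [← Real.exp_nat_mul, ← Real.exp_neg]
    congr 1
    push_cast
    ring
  have h3 : ((m+1:ℕ):ℝ) = (m:ℝ)+1 := hc
  have hmp : (0:ℝ) < (m:ℝ)+1 := by positivity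
  have hep : (0:ℝ) < Real.exp 1 ^ (m+1:ℕ) := by positivity
  have hsq : (0:ℝ) < Real.sqrt (2*((m:ℝ)+1)) := Real.sqrt_pos.2 (by positivity)
  rw [h2, h3]
  rw [Nat.factorial_succ]
  have hpow : (((m:ℝ)+1) / Real.exp 1) ^ (m+1:ℕ) =
      ((m:ℝ)+1)^(m+1:ℕ) / Real.exp 1 ^ (m+1:ℕ) := div_pow _ _ _
  rw [hpow]
  have hmppow : (0:ℝ) < ((m:ℝ)+1)^(m:ℕ) := by positivity
  field_simp
  push_cast
  rw [pow_succ]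
  ring

lemma mu_tendsto_zero : Tendsto mu atTop (nhds 0) := by
  apply tendsto_of_tendsto_of_tendsto_of_le_of_le' (g := fun _ => (0:ℝ))
    (h := fun x : ℝ => 1/(4*x)) tendsto_const_nhds
  · have : Tendsto (fun x : ℝ => 4*x) atTop atTop :=
      (tendsto_id.const_mul_atTop four_pos)
    exact Tendsto.congr (fun x => by simp [one_div]) this.inv_tendsto_atTop
  · filter_upwards [eventually_gt_atTop 0] with x hx
    exact (mu_pos hx).le
  · filter_upwards [eventually_gt_atTop 0] with x hx
    exact mu_le hx

lemma M_tendsto :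
    Tendsto (fun n : ℝ => Real.Gamma n / (Real.sqrt (2 * n) * Real.exp (-n) * n ^ (n - 1)))
      atTop (nhds (Real.exp (1 - mu 1) / Real.sqrt 2)) := by
  have heq : (fun n : ℝ => Real.Gamma n / (Real.sqrt (2 * n) * Real.exp (-n) * n ^ (n - 1)))
      =ᶠ[atTop] (fun x : ℝ => Real.exp (mu x + (1 - mu 1)) / Real.sqrt 2) := by
    filter_upwards [eventually_gt_atTop 0] with x hx
    exact M_eq hx
  rw [tendsto_congr' heq]
  have h1 : Tendsto (fun x : ℝ => mu x + (1 - mu 1)) atTop (nhds (0 + (1 - mu 1))) :=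
    mu_tendsto_zero.add_const _
  rw [zero_add] at h1
  exact (Real.continuous_exp.continuousAt.tendsto.comp h1).div_const _

lemma exp_c_eq : Real.exp (1 - mu 1) / Real.sqrt 2 = Real.sqrt Real.pi := by
  have h1 : Tendsto (fun k : ℕ => Real.Gamma k /
      (Real.sqrt (2 * k) * Real.exp (-(k:ℝ)) * (k:ℝ) ^ ((k:ℝ) - 1))) atTop
      (nhds (Real.exp (1 - mu 1) / Real.sqrt 2)) :=
    M_tendsto.comp tendsto_natCast_atTop_atTop
  have h2 : Tendsto (fun k : ℕ => Real.Gamma k /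
      (Real.sqrt (2 * k) * Real.exp (-(k:ℝ)) * (k:ℝ) ^ ((k:ℝ) - 1))) atTop
      (nhds (Real.sqrt Real.pi)) := by
    apply Stirling.tendsto_stirlingSeq_sqrt_pi.congr'
    filter_upwards [eventually_ge_atTop 1] with k hk
    exact (M_nat k hk).symm
  exact tendsto_nhds_unique h1 h2

theorem stmt_4 :
    (fun n : ℝ => Real.Gamma n / (Real.sqrt (2 * n) * Real.exp (-n) * n ^ (n - 1))) 1 =
        Real.exp 1 / Real.sqrt 2 ∧
    1 < Real.exp 1 / Real.sqrt 2 ∧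
    StrictAntiOn (fun n : ℝ => Real.Gamma n / (Real.sqrt (2 * n) * Real.exp (-n) * n ^ (n - 1)))
      (Set.Ici 1) ∧
    Filter.Tendsto (fun n : ℝ => Real.Gamma n / (Real.sqrt (2 * n) * Real.exp (-n) * n ^ (n - 1)))
      Filter.atTop (nhds (Real.sqrt Real.pi)) ∧
    1 < Real.sqrt Real.pi ∧
    ∀ n : ℝ, 1 ≤ n →
      1 < Real.Gamma n / (Real.sqrt (2 * n) * Real.exp (-n) * n ^ (n - 1)) := by
  have hc := exp_c_eq
  have hpi : 1 < Real.sqrt Real.pi := by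
    rw [show (1:ℝ) = Real.sqrt 1 from Real.sqrt_one.symm]
    exact Real.sqrt_lt_sqrt (by norm_num) (by linarith [Real.pi_gt_three])
  have hs2 : (0:ℝ) < Real.sqrt 2 := Real.sqrt_pos.2 two_pos
  refine ⟨?_, ?_, ?_, ?_, hpi, ?_⟩
  · show Real.Gamma 1 / (Real.sqrt (2 * 1) * Real.exp (-1) * (1:ℝ) ^ ((1:ℝ) - 1)) = _
    rw [Real.Gamma_one, show ((1:ℝ) - 1) = 0 by norm_num, Real.rpow_zero,
      mul_one, Real.exp_neg, mul_one]
    rw [show Real.sqrt 2 * (Real.exp 1)⁻¹ = Real.sqrt 2 / Real.exp 1 by ring]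
    rw [one_div_div]
  · have h2 := Real.sq_sqrt (by norm_num : (0:ℝ) ≤ 2)
    have he := Real.exp_one_gt_d9
    rw [lt_div_iff₀ hs2, one_mul]
    nlinarith [Real.sqrt_nonneg 2]
  · intro x hx y hy hxy
    have hx0 : (0:ℝ) < x := lt_of_lt_of_le one_pos hx
    have hy0 : (0:ℝ) < y := lt_of_lt_of_le one_pos hy
    show Real.Gamma y / _ < Real.Gamma x / _
    rw [M_eq hx0, M_eq hy0]
    have hmu := mu_strictAnti (mem_Ioi.2 hx0) (mem_Ioi.2 hy0) hxy
    have := Real.exp_lt_exp.2 (show mu y + (1 - mu 1) < mu x + (1 - mu 1) by linarith)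
    exact (div_lt_div_iff_of_pos_right hs2).2 this
  · rw [← hc]
    exact M_tendsto
  · intro n hn
    have hn0 : (0:ℝ) < n := lt_of_lt_of_le one_pos hn
    rw [M_eq hn0]
    have hmu := mu_pos hn0
    have h1 : Real.exp (1 - mu 1) < Real.exp (mu n + (1 - mu 1)) :=
      Real.exp_lt_exp.2 (by linarith)
    have h2 : Real.exp (1 - mu 1) / Real.sqrt 2 < Real.exp (mu n + (1 - mu 1)) / Real.sqrt 2 :=
      (div_lt_div_iff_of_pos_right hs2).2 h1
    rw [hc] at h2
    linarith
end

section
/- For every real n ≥ 1, the inequality 2n·ln(n) − 2n·ψ(n) − 1 > 0 holds, where ψ is the digamma function. -/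
open Filter Finset

/-- The digamma function `ψ(x) = d/dx ln Γ(x)`. -/
noncomputable def digamma (x : ℝ) : ℝ := deriv (fun y => Real.log (Real.Gamma y)) x


/-- elementary: for `0 < t`, `log (1+t) < t - t^2/(2*(1+t))`. -/
lemma log_lt_aux {t : ℝ} (ht : 0 < t) :
    Real.log (1 + t) < t - t ^ 2 / (2 * (1 + t)) := by
  set F : ℝ → ℝ := fun u => u - u ^ 2 / (2 * (1 + u)) - Real.log (1 + u) with hF
  have hderiv : ∀ u : ℝ, 0 < u → HasDerivAt F (u ^ 2 / (2 * (1 + u) ^ 2)) u := by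
    intro u hu
    have h1 : (0:ℝ) < 1 + u := by linarith
    have hd1 : HasDerivAt (fun v : ℝ => v ^ 2 / (2 * (1 + v)))
        (((2:ℝ) * u ^ 1 * (2 * (1 + u)) - u ^ 2 * (2 * 1)) / (2 * (1 + u)) ^ 2) u := by
      exact HasDerivAt.div (by simpa using hasDerivAt_pow 2 u)
        (((hasDerivAt_id u).const_add 1).const_mul 2) (by positivity)
    have hd2 : HasDerivAt (fun v : ℝ => Real.log (1 + v)) (1 / (1 + u)) u := by
      simpa using (((hasDerivAt_id u).const_add 1).log h1.ne')
    have h := ((hasDerivAt_id u).sub hd1).sub hd2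
    refine h.congr_deriv ?_
    field_simp
    ring
  have hcont : ContinuousOn F (Set.Ici 0) := by
    apply ContinuousOn.sub
    · apply ContinuousOn.sub continuousOn_id
      exact ContinuousOn.div (by fun_prop) (by fun_prop)
        (fun u hu => by simp at hu; positivity)
    · apply ContinuousOn.log (by fun_prop)
      intro u hu; simp at hu; positivity
  have hmono : StrictMonoOn F (Set.Ici 0) := by
    apply strictMonoOn_of_deriv_pos (convex_Ici 0) hcont
    intro u hu
    rw [interior_Ici] at hu
    have hu' : (0:ℝ) < u := hu
    rw [(hderiv u hu').deriv]
    positivity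
  have h0 : F 0 = 0 := by simp [hF]
  have := hmono (Set.self_mem_Ici) (Set.mem_Ici.2 ht.le) ht
  rw [h0] at this
  simp only [hF] at this
  linarith

/-- strict lower bound on the basic term. -/
lemma cterm_lb {u : ℝ} (hu : 0 < u) :
    (2*u)⁻¹ - (2*(u+1))⁻¹ < u⁻¹ - (Real.log (u + 1) - Real.log u) := by
  have h1 : Real.log (u + 1) - Real.log u = Real.log (1 + u⁻¹) := by
    rw [← Real.log_div (by positivity) hu.ne']
    congr 1
    field_simp
  have h2 := log_lt_aux (t := u⁻¹) (by positivity)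
  have h3 : (u⁻¹) ^ 2 / (2 * (1 + u⁻¹)) = (2*u)⁻¹ - (2*(u+1))⁻¹ := by
    field_simp
    ring
  rw [h1]
  linarith [h2, h3.le, h3.ge]

/-- upper bound on the basic term. -/
lemma cterm_ub {u : ℝ} (hu : 0 < u) :
    u⁻¹ - (Real.log (u + 1) - Real.log u) ≤ u⁻¹ - (u+1)⁻¹ := by
  have h0 : (0:ℝ) < u + 1 := by linarith
  have h1 : Real.log (u / (u+1)) ≤ u / (u+1) - 1 :=
    Real.log_le_sub_one_of_pos (by positivity)
  rw [Real.log_div hu.ne' h0.ne'] at h1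
  have h2 : u / (u+1) - 1 = -(u+1)⁻¹ := by field_simp; ring
  rw [h2] at h1
  linarith

lemma cterm_nonneg {u : ℝ} (hu : 0 < u) :
    0 ≤ u⁻¹ - (Real.log (u + 1) - Real.log u) := by
  have := cterm_lb hu
  have h : (2*(u+1))⁻¹ ≤ (2*u)⁻¹ := by
    apply inv_anti₀ (by positivity) (by linarith)
  linarith

lemma diff_inv_eq {v : ℝ} (hv : 0 < v) : v⁻¹ - (v+1)⁻¹ = (v*(v+1))⁻¹ := by
  field_simp
  ring

lemma diff_inv_anti {a v : ℝ} (ha : 0 < a) (hav : a ≤ v) :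
    v⁻¹ - (v+1)⁻¹ ≤ a⁻¹ - (a+1)⁻¹ := by
  have hv : 0 < v := lt_of_lt_of_le ha hav
  rw [diff_inv_eq hv, diff_inv_eq ha]
  apply inv_anti₀ (by positivity)
  nlinarith

lemma summable_diff_inv {a : ℝ} (ha : 0 < a) :
    Summable (fun m : ℕ => (a + m)⁻¹ - (a + m + 1)⁻¹) := by
  apply summable_of_sum_range_le (c := a⁻¹)
  · intro m
    have h : (0:ℝ) < a + m := by positivity
    rw [show a + (m:ℝ) + 1 = (a+m) + 1 by ring, diff_inv_eq h]
    positivity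
  · intro N
    have h : ∀ i : ℕ, (a + i)⁻¹ - (a + i + 1)⁻¹ =
        (fun j : ℕ => (a + j)⁻¹) i - (fun j : ℕ => (a + j)⁻¹) (i+1) := by
      intro i; push_cast; ring_nf
    rw [Finset.sum_congr rfl (fun i _ => h i), Finset.sum_range_sub' (fun j : ℕ => (a + j)⁻¹) N]
    have : (0:ℝ) ≤ (a + N)⁻¹ := by positivity
    simp only [Nat.cast_zero, add_zero]
    linarith

noncomputable def cfun (y : ℝ) (m : ℕ) : ℝ :=
  (y + m)⁻¹ - (Real.log (y + m + 1) - Real.log (y + m))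

lemma cfun_nonneg {y : ℝ} (hy : 0 < y) (m : ℕ) : 0 ≤ cfun y m := by
  have h : (0:ℝ) < y + m := by positivity
  simpa [cfun, add_assoc] using cterm_nonneg h

lemma cfun_ub {y : ℝ} (hy : 0 < y) (m : ℕ) : cfun y m ≤ (y + m)⁻¹ - (y + m + 1)⁻¹ := by
  have h : (0:ℝ) < y + m := by positivity
  simpa [cfun, add_assoc] using cterm_ub h

lemma summable_cfun {y : ℝ} (hy : 0 < y) : Summable (cfun y) :=
  Summable.of_nonneg_of_le (cfun_nonneg hy) (cfun_ub hy) (summable_diff_inv hy)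

lemma digamma_eq {x : ℝ} (hx : 0 < x) :
    digamma x = Real.log x - ∑' m, cfun x m := by
  set s : Set ℝ := Set.Ioo (x/2) (x+1) with hs_def
  have ha : (0:ℝ) < x/2 := by linarith
  have hxs : x ∈ s := ⟨by linarith, by linarith⟩
  have hys : ∀ y ∈ s, 0 < y := fun y hy => lt_trans ha hy.1
  -- uniform convergence of partial sums of cfun
  have hU : TendstoUniformlyOn (fun N y => ∑ m ∈ range N, cfun y m)
      (fun y => ∑' m, cfun y m) atTop s := by
    apply tendstoUniformlyOn_tsum_nat (summable_diff_inv ha)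
    intro m y hy
    have hy0 : 0 < y := hys y hy
    have h1 : (0:ℝ) < y + m := by positivity
    rw [Real.norm_eq_abs, abs_of_nonneg (cfun_nonneg hy0 m)]
    refine le_trans (cfun_ub hy0 m) ?_
    have h2 : x/2 + m ≤ y + m := by have := hy.1; linarith
    have := diff_inv_anti (a := x/2 + m) (v := y + m) (by positivity) h2
    convert this using 2 <;> ring
  have hU1 : TendstoUniformlyOn (fun n y => ∑ m ∈ range (n+1), cfun y m)
      (fun y => ∑' m, cfun y m) atTop s :=
    fun v hv => (tendsto_add_atTop_nat 1).eventually (hU v hv)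
  -- the "log y - partial sums" part
  have hP : TendstoUniformlyOn (fun n y => Real.log y - ∑ m ∈ range (n+1), cfun y m)
      (fun y => Real.log y - ∑' m, cfun y m) atTop s := by
    have hconst : TendstoUniformlyOn (fun _ : ℕ => fun y => Real.log y)
        (fun y => Real.log y) atTop s :=
      fun u hu => Eventually.of_forall (fun n y _ => refl_mem_uniformity hu)
    exact hconst.sub hU1
  -- the vanishing part
  have hQ : TendstoUniformlyOn (fun (n : ℕ) (y : ℝ) => Real.log n - Real.log (y + n + 1))
      (fun _ => (0:ℝ)) atTop s := by
    rw [Metric.tendstoUniformlyOn_iff]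
    intro ε hε
    have h0 : Tendsto (fun n : ℕ => (x+2)/n) atTop (nhds 0) :=
      tendsto_const_div_atTop_nhds_zero_nat (x+2)
    filter_upwards [h0.eventually (gt_mem_nhds hε), eventually_ge_atTop 1] with n hn hn1
    intro y hy
    have hy0 : 0 < y := hys y hy
    have hn0 : (0:ℝ) < n := by exact_mod_cast hn1
    have hlt : Real.log n ≤ Real.log (y + n + 1) :=
      Real.log_le_log hn0 (by linarith)
    have hdiv : Real.log (y + n + 1) - Real.log n = Real.log ((y + n + 1)/n) := by
      rw [Real.log_div (by linarith) hn0.ne']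
    have hle : Real.log ((y + n + 1)/n) ≤ (y + n + 1)/n - 1 :=
      Real.log_le_sub_one_of_pos (by positivity)
    have heq : (y + n + 1)/n - 1 = (y+1)/n := by field_simp; ring
    have hyb : y + 1 ≤ x + 2 := by have := hy.2; linarith
    have : Real.log (y + n + 1) - Real.log n < ε := by
      calc Real.log (y + n + 1) - Real.log n ≤ (y+1)/n := by rw [hdiv]; linarith [hle, heq.le, heq.ge]
      _ ≤ (x+2)/n := by gcongr
      _ < ε := hn
    rw [Real.dist_eq, abs_sub_comm, sub_zero, abs_of_nonpos (by linarith)]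
    linarith
  -- telescoping identity
  have hident : ∀ (n : ℕ), ∀ y ∈ s,
      Real.log n - ∑ m ∈ range (n+1), (y + m)⁻¹ =
      (Real.log y - ∑ m ∈ range (n+1), cfun y m) + (Real.log n - Real.log (y + n + 1)) := by
    intro n y hy
    have htel : ∑ m ∈ range (n+1), (Real.log (y + m + 1) - Real.log (y + m)) =
        Real.log (y + n + 1) - Real.log y := by
      have h : ∀ i ∈ range (n+1), Real.log (y + i + 1) - Real.log (y + i) =
          (fun j : ℕ => Real.log (y + j)) (i+1) - (fun j : ℕ => Real.log (y + j)) i := by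
        intro i _
        simp only []
        push_cast
        ring_nf
      rw [Finset.sum_congr rfl h, Finset.sum_range_sub (fun j : ℕ => Real.log (y + j)) (n+1)]
      push_cast
      ring_nf
    have hsum : ∑ m ∈ range (n+1), cfun y m =
        (∑ m ∈ range (n+1), (y + m)⁻¹) - (Real.log (y + n + 1) - Real.log y) := by
      rw [← htel]
      simp [cfun, Finset.sum_sub_distrib]
    rw [hsum]
    ring
  -- uniform convergence of the derivatives
  have hUall : TendstoUniformlyOn
      (fun (n : ℕ) (y : ℝ) => Real.log n - ∑ m ∈ range (n+1), (y + m)⁻¹)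
      (fun y => Real.log y - ∑' m, cfun y m) atTop s := by
    have h : TendstoUniformlyOn
        (fun (n : ℕ) (y : ℝ) => (Real.log y - ∑ m ∈ range (n+1), cfun y m) +
          (Real.log n - Real.log (y + n + 1)))
        (fun y => (Real.log y - ∑' m, cfun y m) + 0) atTop s := hP.add hQ
    simp only [add_zero] at h
    apply h.congr
    filter_upwards with n
    intro y hy
    exact (hident n y hy).symm
  -- each fseq has the expected derivative
  have hder : ∀ᶠ (n : ℕ) in atTop, ∀ y ∈ s,
      HasDerivAt (fun z : ℝ => z * Real.log n + Real.log ((Nat.factorial n : ℕ) : ℝ) -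
        ∑ m ∈ range (n+1), Real.log (z + m))
        (Real.log n - ∑ m ∈ range (n+1), (y + m)⁻¹) y := by
    filter_upwards with n
    intro y hy
    have hy0 : 0 < y := hys y hy
    have h1 : HasDerivAt (fun z : ℝ => z * Real.log n + Real.log ((Nat.factorial n : ℕ) : ℝ)) (Real.log n) y :=
      (hasDerivAt_mul_const _).add_const _
    have h2 : HasDerivAt (fun z : ℝ => ∑ m ∈ range (n+1), Real.log (z + m))
        (∑ m ∈ range (n+1), (y + m)⁻¹) y := by
      apply HasDerivAt.fun_sum
      intro m _
      have hpos : (0:ℝ) < y + m := by positivity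
      have := (((hasDerivAt_id y).add_const (m:ℝ)).log hpos.ne')
      simpa [one_div] using this
    exact h1.sub h2
  -- pointwise convergence to log ∘ Gamma
  have hpt : ∀ y ∈ s, Tendsto (fun n : ℕ => y * Real.log n + Real.log ((Nat.factorial n : ℕ) : ℝ) -
      ∑ m ∈ range (n+1), Real.log (y + m)) atTop (nhds (Real.log (Real.Gamma y))) := by
    intro y hy
    have hy0 : 0 < y := hys y hy
    have hg := Real.GammaSeq_tendsto_Gamma y
    have hcont : Tendsto Real.log (nhds (Real.Gamma y)) (nhds (Real.log (Real.Gamma y))) :=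
      (Real.continuousAt_log (Real.Gamma_pos_of_pos hy0).ne').tendsto
    have h2 : Tendsto (fun n => Real.log (Real.GammaSeq y n)) atTop
        (nhds (Real.log (Real.Gamma y))) := hcont.comp hg
    apply h2.congr'
    filter_upwards [eventually_ge_atTop 1] with n hn1
    have hn0 : (0:ℝ) < n := by exact_mod_cast hn1
    have hprod : ∀ j ∈ range (n+1), y + (j:ℝ) ≠ 0 := by
      intro j _
      positivity
    have hprodpos : (0:ℝ) < ∏ j ∈ range (n+1), (y + j) := by
      apply Finset.prod_pos
      intro j _
      positivity
    rw [Real.GammaSeq, Real.log_div (by positivity) hprodpos.ne',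
      Real.log_mul (by positivity) (by positivity), Real.log_rpow hn0,
      Real.log_prod hprod]
  -- conclude
  have H : HasDerivAt (fun y => Real.log (Real.Gamma y)) (Real.log x - ∑' m, cfun x m) x := by
    apply hasDerivAt_of_tendstoUniformlyOn isOpen_Ioo hUall ?_ hpt hxs
    filter_upwards [hder] with n hn
    intro y hy
    exact hn y hy
  exact H.deriv

theorem stmt_6 (n : ℝ) (hn : 1 ≤ n) :
    0 < 2 * n * Real.log n - 2 * n * digamma n - 1 := by
  have hn0 : (0:ℝ) < n := by linarith
  rw [digamma_eq hn0]
  have hsum := summable_cfun hn0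
  -- tail lower bound via telescoping sum
  have hd : HasSum (fun m : ℕ => (2*(n+1+m))⁻¹ - (2*(n+1+m+1))⁻¹) ((2*(n+1))⁻¹) := by
    rw [hasSum_iff_tendsto_nat_of_nonneg]
    · have heq : ∀ N : ℕ, ∑ m ∈ range N, ((2*(n+1+m))⁻¹ - (2*(n+1+m+1))⁻¹) =
          (2*(n+1))⁻¹ - (2*(n+1+N))⁻¹ := by
        intro N
        have h : ∀ i ∈ range N, (2*(n+1+(i:ℝ)))⁻¹ - (2*(n+1+i+1))⁻¹ =
            (fun j : ℕ => (2*(n+1+(j:ℝ)))⁻¹) i - (fun j : ℕ => (2*(n+1+(j:ℝ)))⁻¹) (i+1) := by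
          intro i _
          simp only []
          push_cast
          ring_nf
        rw [Finset.sum_congr rfl h, Finset.sum_range_sub' (fun j : ℕ => (2*(n+1+(j:ℝ)))⁻¹) N]
        norm_num
      have hlim : Tendsto (fun N : ℕ => (2*(n+1+(N:ℝ)))⁻¹) atTop (nhds 0) := by
        apply Filter.Tendsto.comp tendsto_inv_atTop_zero
        apply Filter.Tendsto.const_mul_atTop (by norm_num : (0:ℝ) < 2)
        apply Filter.tendsto_atTop_add_const_left
        exact tendsto_natCast_atTop_atTop
      have hc : Tendsto (fun _ : ℕ => (2*(n+1))⁻¹) atTop (nhds ((2*(n+1))⁻¹)) :=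
        tendsto_const_nhds
      have := hc.sub hlim
      rw [sub_zero] at this
      exact Tendsto.congr (fun N => (heq N).symm) this
    · intro m
      have h1 : (0:ℝ) < 2*(n+1+m) := by positivity
      have h2 : 2*(n+1+(m:ℝ)) ≤ 2*(n+1+m+1) := by linarith
      have := inv_anti₀ h1 h2
      linarith
  have htail : (2*(n+1))⁻¹ ≤ ∑' m, cfun n (m+1) := by
    rw [← hd.tsum_eq]
    apply Summable.tsum_le_tsum _ hd.summable ((summable_nat_add_iff 1).mpr hsum)
    intro m
    have hu : (0:ℝ) < n + (m+1 : ℕ) := by positivity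
    have := (cterm_lb hu).le
    have hcast : (n + ((m+1 : ℕ):ℝ)) = n + 1 + m := by push_cast; ring
    rw [hcast] at this
    calc (2*(n+1+m))⁻¹ - (2*(n+1+m+1))⁻¹ ≤ (n+1+m)⁻¹ - (Real.log (n+1+m+1) - Real.log (n+1+m)) := by
          convert this using 3 <;> ring
      _ = cfun n (m+1) := by
          simp only [cfun]
          push_cast
          ring_nf
  have hhead : (2*n)⁻¹ - (2*(n+1))⁻¹ < cfun n 0 := by
    have := cterm_lb hn0
    simpa [cfun] using this
  have hT : (2*n)⁻¹ < ∑' m, cfun n m := by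
    rw [Summable.tsum_eq_zero_add hsum]
    linarith
  have h2n : (0:ℝ) < 2*n := by linarith
  have hmul : 2*n * (2*n)⁻¹ < 2*n * (∑' m, cfun n m) := (mul_lt_mul_iff_right₀ h2n).mpr hT
  rw [mul_inv_cancel₀ h2n.ne'] at hmul
  nlinarith [hmul]
end

section
/- Let n ≥ 2 be a natural number and set c = 2e^{-2n}n^{2n-1}/Γ(n)². Let f₃(x) = −c·(ln x)² + ln x + 1/x − 1, i.e. f₃(x) = −2e^{-2n}n^{2n-1}Γ(n)^{-2}·(ln x)² + ln x + 1/x − 1. Then f₃(x) > 0 for all x in the interval (1, e^{Γ(n)/(e^{-n}n^n)}]. -/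
set_option maxHeartbeats 1000000

open Real

private lemma nonneg_of_deriv (f f' : ℝ → ℝ) (hd : ∀ u, HasDerivAt f (f' u) u)
    (h0 : f 0 = 0) (hf' : ∀ u, 0 ≤ u → 0 ≤ f' u) : ∀ u, 0 ≤ u → 0 ≤ f u := by
  intro u hu
  have hmono : MonotoneOn f (Set.Ici 0) := by
    apply monotoneOn_of_deriv_nonneg (convex_Ici 0)
    · exact fun x _ => (hd x).continuousAt.continuousWithinAt
    · exact fun x _ => (hd x).differentiableAt.differentiableWithinAt
    · intro x hx
      rw [interior_Ici] at hx
      rw [(hd x).deriv]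
      exact hf' x (le_of_lt hx)
  have h := hmono (Set.mem_Ici.mpr le_rfl) (Set.mem_Ici.mpr hu) hu
  linarith [h0 ▸ h]

private lemma hdExpNeg (u : ℝ) : HasDerivAt (fun v : ℝ => Real.exp (-v)) (-Real.exp (-u)) u := by
  simpa [Function.comp_def] using (Real.hasDerivAt_exp (-u)).comp u (hasDerivAt_neg u)

private lemma lemE1 (u : ℝ) : 1 - u ≤ Real.exp (-u) := by
  linarith [Real.add_one_le_exp (-u)]

private lemma lemE2 : ∀ u : ℝ, 0 ≤ u → Real.exp (-u) ≤ 1 - u + u^2/2 := by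
  intro u hu
  have h := nonneg_of_deriv (fun v => 1 - v + v^2/2 - Real.exp (-v))
      (fun v => -1 + v + Real.exp (-v))
      (fun v => by
        have h := (((hasDerivAt_const v (1:ℝ)).sub (hasDerivAt_id' v)).add
          ((hasDerivAt_pow 2 v).div_const 2)).sub (hdExpNeg v)
        refine h.congr_deriv ?_
        push_cast; ring)
      (by norm_num)
      (fun v _ => by linarith [lemE1 v]) u hu
  linarith

private lemma lemE3 : ∀ u : ℝ, 0 ≤ u → 1 - u + u^2/2 - u^3/6 ≤ Real.exp (-u) := by
  intro u hu
  have h := nonneg_of_deriv (fun v => Real.exp (-v) - (1 - v + v^2/2 - v^3/6))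
      (fun v => -Real.exp (-v) + 1 - v + v^2/2)
      (fun v => by
        have h := (hdExpNeg v).sub ((((hasDerivAt_const v (1:ℝ)).sub (hasDerivAt_id' v)).add
          ((hasDerivAt_pow 2 v).div_const 2)).sub ((hasDerivAt_pow 3 v).div_const 6))
        refine h.congr_deriv ?_
        push_cast; ring)
      (by norm_num)
      (fun v hv => by linarith [lemE2 v hv]) u hu
  linarith

private lemma lemE4 : ∀ u : ℝ, 0 ≤ u →
    Real.exp (-u) ≤ 1 - u + u^2/2 - u^3/6 + u^4/24 := by
  intro u hu
  have h := nonneg_of_deriv (fun v => 1 - v + v^2/2 - v^3/6 + v^4/24 - Real.exp (-v))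
      (fun v => -1 + v - v^2/2 + v^3/6 + Real.exp (-v))
      (fun v => by
        have h := ((((((hasDerivAt_const v (1:ℝ)).sub (hasDerivAt_id' v)).add
          ((hasDerivAt_pow 2 v).div_const 2)).sub ((hasDerivAt_pow 3 v).div_const 6)).add
          ((hasDerivAt_pow 4 v).div_const 24))).sub (hdExpNeg v)
        refine h.congr_deriv ?_
        push_cast; ring)
      (by norm_num)
      (fun v hv => by linarith [lemE3 v hv]) u hu
  linarith

private lemma lemE5 : ∀ u : ℝ, 0 ≤ u →
    1 - u + u^2/2 - u^3/6 + u^4/24 - u^5/120 ≤ Real.exp (-u) := by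
  intro u hu
  have h := nonneg_of_deriv
      (fun v => Real.exp (-v) - (1 - v + v^2/2 - v^3/6 + v^4/24 - v^5/120))
      (fun v => -Real.exp (-v) + 1 - v + v^2/2 - v^3/6 + v^4/24)
      (fun v => by
        have h := (hdExpNeg v).sub (((((((hasDerivAt_const v (1:ℝ)).sub (hasDerivAt_id' v)).add
          ((hasDerivAt_pow 2 v).div_const 2)).sub ((hasDerivAt_pow 3 v).div_const 6)).add
          ((hasDerivAt_pow 4 v).div_const 24))).sub ((hasDerivAt_pow 5 v).div_const 120))
        refine h.congr_deriv ?_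
        push_cast; ring)
      (by norm_num)
      (fun v hv => by linarith [lemE4 v hv]) u hu
  linarith

private lemma lemB : ∀ u : ℝ, 0 ≤ u → 2 - u ≤ (2 + u) * Real.exp (-u) := by
  intro u hu
  have h := nonneg_of_deriv (fun v => (2 + v) * Real.exp (-v) - 2 + v)
      (fun v => 1 - (1 + v) * Real.exp (-v))
      (fun v => by
        have h := ((((hasDerivAt_const v (2:ℝ)).add (hasDerivAt_id' v)).mul
          (hdExpNeg v)).sub_const 2).add (hasDerivAt_id' v)
        refine h.congr_deriv ?_
        simp only [Pi.add_apply]; ring)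
      (by norm_num)
      (fun v _ => by
        have h1 : (1 + v) * Real.exp (-v) ≤ Real.exp v * Real.exp (-v) :=
          mul_le_mul_of_nonneg_right (by linarith [Real.add_one_le_exp v]) (Real.exp_pos _).le
        have h2 : Real.exp v * Real.exp (-v) = 1 := by
          rw [← Real.exp_add]; simp
        linarith) u hu
  linarith


private lemma qmono (s t : ℝ) (hs : 0 < s) (hst : s ≤ t) :
    (t + Real.exp (-t) - 1) * s^2 ≤ (s + Real.exp (-s) - 1) * t^2 := by
  have hder : ∀ u : ℝ, u ≠ 0 → HasDerivAt (fun u : ℝ => (u + Real.exp (-u) - 1) / u^2)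
      (((1 - Real.exp (-u)) * u^2 - (u + Real.exp (-u) - 1) * (2*u)) / (u^2)^2) u := by
    intro u hu
    have hf : HasDerivAt (fun v : ℝ => v + Real.exp (-v) - 1) (1 - Real.exp (-u)) u := by
      have h := ((hasDerivAt_id' u).add (hdExpNeg u)).sub_const 1
      refine h.congr_deriv ?_; ring
    have hg : HasDerivAt (fun v : ℝ => v^2) (2*u) u := by
      simpa using hasDerivAt_pow 2 u
    exact hf.div hg (pow_ne_zero 2 hu)
  have hanti : AntitoneOn (fun u : ℝ => (u + Real.exp (-u) - 1) / u^2) (Set.Icc s t) := by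
    apply antitoneOn_of_deriv_nonpos (convex_Icc s t)
    · intro u hu
      have hu0 : u ≠ 0 := by have := hu.1; intro h; rw [h] at this; linarith
      exact (hder u hu0).continuousAt.continuousWithinAt
    · intro u hu
      rw [interior_Icc] at hu
      have hu0 : u ≠ 0 := by have := hu.1; intro h; rw [h] at this; linarith
      exact (hder u hu0).differentiableAt.differentiableWithinAt
    · intro u hu
      rw [interior_Icc] at hu
      have hu0 : 0 < u := lt_trans hs hu.1
      rw [(hder u hu0.ne').deriv]
      apply div_nonpos_of_nonpos_of_nonneg _ (by positivity)
      have hB := lemB u hu0.le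
      nlinarith [mul_nonpos_of_nonneg_of_nonpos hu0.le
        (by linarith : (2 - u) - (2 + u) * Real.exp (-u) ≤ 0)]
  have h := hanti (Set.left_mem_Icc.mpr hst) (Set.right_mem_Icc.mpr hst) hst
  dsimp only at h
  have ht0 : 0 < t := lt_of_lt_of_le hs hst
  rw [div_le_div_iff₀ (pow_pos ht0 2) (pow_pos hs 2)] at h
  linarith


/-- numeric helper: from explicit bounds l ≤ T ≤ u, conclude. -/
private lemma numeric_case (N T l u : ℝ) (hl : l ≤ T) (hu : T ≤ u) (hu0 : 0 ≤ u)
    (c : ℝ) (hc : c ≤ (1 - u/2 + (u/2)^2/2 - (u/2)^3/6 + (u/2)^4/24 - (u/2)^5/120)^2)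
    (hP : 0 ≤ 1 - u/2 + (u/2)^2/2 - (u/2)^3/6 + (u/2)^4/24 - (u/2)^5/120)
    (hfin : 2 < N * (l + c - 1)) (hN : 0 < N) :
    2 < N * (T + Real.exp (-T) - 1) := by
  have h1 : Real.exp (-u) ≤ Real.exp (-T) := Real.exp_le_exp.mpr (by linarith)
  have h2 : Real.exp (-u) = Real.exp (-(u/2))^2 := by
    rw [sq, ← Real.exp_add]; ring_nf
  have h3 := lemE5 (u/2) (by linarith)
  have h4 : (1 - u/2 + (u/2)^2/2 - (u/2)^3/6 + (u/2)^4/24 - (u/2)^5/120)^2 ≤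
      Real.exp (-(u/2))^2 := by
    apply pow_le_pow_left₀ hP h3
  have h5 : c ≤ Real.exp (-T) := by
    rw [h2] at h1
    linarith
  nlinarith [hN, h5, hl]

private lemma endpoint (n : ℕ) (hn : 2 ≤ n) :
    2 < (n:ℝ) * (Real.Gamma n / (Real.exp (-(n : ℝ)) * (n : ℝ) ^ n)
      + Real.exp (-(Real.Gamma n / (Real.exp (-(n : ℝ)) * (n : ℝ) ^ n))) - 1) := by
  have hn0 : 0 < n := by omega
  set T : ℝ := Real.Gamma n / (Real.exp (-(n : ℝ)) * (n : ℝ) ^ n) with hT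
  have hGamma : Real.Gamma n = ((n-1).factorial : ℝ) := by
    have h : n - 1 + 1 = n := by omega
    rw [← Real.Gamma_nat_eq_factorial (n-1)]
    congr 1
    conv_lhs => rw [← h]
    push_cast
    ring
  have hTeq : T = ((n-1).factorial : ℝ) * Real.exp 1 ^ n / (n:ℝ)^n := by
    rw [hT, hGamma, Real.exp_neg]
    have : Real.exp ((n:ℝ)) = Real.exp 1 ^ n := by
      rw [← Real.exp_nat_mul]; norm_num
    rw [this]
    field_simp
  have hel := Real.exp_one_gt_d9
  have heu := Real.exp_one_lt_d9
  have hpl : (2.7182818283:ℝ)^n ≤ Real.exp 1 ^ n :=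
    pow_le_pow_left₀ (by norm_num) hel.le n
  have hpu : Real.exp 1 ^ n ≤ (2.7182818286:ℝ)^n :=
    pow_le_pow_left₀ (Real.exp_pos 1).le heu.le n
  rcases lt_or_ge n 6 with h6 | h6
  · interval_cases n
    · -- n = 2
      have hee : Real.exp 1 ^ 2 = Real.exp 2 := by
        rw [← Real.exp_nat_mul]; norm_num
      have hel2 : (7.3890560974:ℝ) ≤ (2.7182818283:ℝ)^2 := by norm_num
      have heu2 : ((2.7182818286:ℝ))^2 ≤ (7.3890560997:ℝ) := by norm_num
      have hl : (1.8472640:ℝ) ≤ T := by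
        rw [hTeq]; norm_num [Nat.factorial]; nlinarith [hpl, hel2, hee]
      have hu : T ≤ (1.8472641:ℝ) := by
        rw [hTeq]; norm_num [Nat.factorial]; nlinarith [hpu, heu2, hee]
      exact numeric_case _ T 1.8472640 1.8472641 hl hu (by norm_num) 0.1570 (by norm_num) (by norm_num)
        (by norm_num) (by norm_num)
    · -- n = 3
      have hee : Real.exp 1 ^ 3 = Real.exp 3 := by
        rw [← Real.exp_nat_mul]; norm_num
      have hel2 : (20.085536919:ℝ) ≤ (2.7182818283:ℝ)^3 := by norm_num
      have heu2 : ((2.7182818286:ℝ))^3 ≤ (20.085536927:ℝ) := by norm_num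
      have hl : (1.4878175:ℝ) ≤ T := by
        rw [hTeq]; norm_num [Nat.factorial]; nlinarith [hpl, hel2, hee]
      have hu : T ≤ (1.4878176:ℝ) := by
        rw [hTeq]; norm_num [Nat.factorial]; nlinarith [hpu, heu2, hee]
      exact numeric_case _ T 1.4878175 1.4878176 hl hu (by norm_num) 0.2256 (by norm_num) (by norm_num)
        (by norm_num) (by norm_num)
    · -- n = 4
      have hee : Real.exp 1 ^ 4 = Real.exp 4 := by
        rw [← Real.exp_nat_mul]; norm_num
      have hel2 : (54.59815002:ℝ) ≤ (2.7182818283:ℝ)^4 := by norm_num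
      have heu2 : ((2.7182818286:ℝ))^4 ≤ (54.598150045:ℝ) := by norm_num
      have hl : (1.2796441:ℝ) ≤ T := by
        rw [hTeq]; norm_num [Nat.factorial]; nlinarith [hpl, hel2, hee]
      have hu : T ≤ (1.2796442:ℝ) := by
        rw [hTeq]; norm_num [Nat.factorial]; nlinarith [hpu, heu2, hee]
      exact numeric_case _ T 1.2796441 1.2796442 hl hu (by norm_num) 0.278 (by norm_num) (by norm_num)
        (by norm_num) (by norm_num)
    · -- n = 5
      have hee : Real.exp 1 ^ 5 = Real.exp 5 := by
        rw [← Real.exp_nat_mul]; norm_num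
      have hel2 : (148.413159059:ℝ) ≤ (2.7182818283:ℝ)^5 := by norm_num
      have heu2 : ((2.7182818286:ℝ))^5 ≤ (148.413159142:ℝ) := by norm_num
      have hl : (1.1398130:ℝ) ≤ T := by
        rw [hTeq]; norm_num [Nat.factorial]; nlinarith [hpl, hel2, hee]
      have hu : T ≤ (1.1398131:ℝ) := by
        rw [hTeq]; norm_num [Nat.factorial]; nlinarith [hpu, heu2, hee]
      exact numeric_case _ T 1.1398130 1.1398131 hl hu (by norm_num) 0.3198 (by norm_num) (by norm_num)
        (by norm_num) (by norm_num)
  · -- n ≥ 6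
    have hN6 : (6:ℝ) ≤ (n:ℝ) := by exact_mod_cast h6
    have hNpos : (0:ℝ) < (n:ℝ) := by linarith
    set s := Stirling.stirlingSeq n with hsdef
    have hfact : ((n-1).factorial : ℝ) = (n.factorial : ℝ)/(n:ℝ) := by
      rw [← Nat.mul_factorial_pred hn0.ne']
      push_cast
      field_simp
    have hTs : T = Real.sqrt (2*(n:ℝ)) * s / (n:ℝ) := by
      rw [hTeq, hfact, hsdef, Stirling.stirlingSeq]
      rw [div_pow]
      have hsq2n : (0:ℝ) < Real.sqrt (2*(n:ℝ)) := Real.sqrt_pos.mpr (by linarith)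
      field_simp
    have hsq : Real.sqrt (2*(n:ℝ)) ^ 2 = 2*(n:ℝ) := Real.sq_sqrt (by linarith)
    have hNT2 : (n:ℝ) * T^2 = 2 * s^2 := by
      rw [hTs, div_pow, mul_pow, hsq]
      field_simp
    have htend : Filter.Tendsto (Stirling.stirlingSeq ∘ Nat.succ) Filter.atTop
        (nhds (Real.sqrt π)) :=
      Stirling.tendsto_stirlingSeq_sqrt_pi.comp (Filter.tendsto_add_atTop_nat 1)
    have hsge : Real.sqrt π ≤ s := by
      have h := Stirling.stirlingSeq'_antitone.le_of_tendsto htend (n-1)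
      simpa [Function.comp, Nat.succ_eq_add_one, show n-1+1 = n from by omega] using h
    have hsle : s ≤ Stirling.stirlingSeq 6 := by
      have h := Stirling.stirlingSeq'_antitone (show 5 ≤ n-1 by omega)
      simpa [Function.comp, Nat.succ_eq_add_one, show n-1+1 = n from by omega] using h
    have h6e : Real.exp 1 ^ 6 ≤ 403.429 := by
      calc Real.exp 1^6 ≤ 2.7182818286^6 := pow_le_pow_left₀ (Real.exp_pos 1).le heu.le 6
      _ ≤ 403.429 := by norm_num
    have h12 : (3.4641:ℝ) ≤ Real.sqrt 12 :=
      (Real.le_sqrt (by norm_num) (by norm_num)).mpr (by norm_num)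
    have hs6form : Stirling.stirlingSeq 6 = 720 * Real.exp 1^6 / (Real.sqrt 12 * 46656) := by
      rw [Stirling.stirlingSeq, div_pow]
      norm_num [Nat.factorial]
      field_simp
    have hs6 : Stirling.stirlingSeq 6 ≤ 9/5 := by
      rw [hs6form, div_le_iff₀ (by positivity)]
      linarith [h6e, h12]
    have hs0 : 0 ≤ s := le_trans (Real.sqrt_nonneg _) hsge
    have hs95 : s ≤ 9/5 := le_trans hsle hs6
    have h2N : Real.sqrt (2*(n:ℝ)) ≤ 0.5774*(n:ℝ) := by
      have h : Real.sqrt (2*(n:ℝ)) ≤ Real.sqrt ((0.5774*(n:ℝ))^2) :=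
        Real.sqrt_le_sqrt (by nlinarith)
      rwa [Real.sqrt_sq (by positivity)] at h
    have hT21 : T ≤ 21/20 := by
      rw [hTs, div_le_iff₀ hNpos]
      nlinarith [mul_le_mul_of_nonneg_left hs95 (Real.sqrt_nonneg (2*(n:ℝ))),
        mul_le_mul_of_nonneg_right h2N (by norm_num : (0:ℝ) ≤ 9/5), hN6]
    have hpi : π ≤ s^2 := by
      have h := pow_le_pow_left₀ (Real.sqrt_nonneg π) hsge 2
      rwa [Real.sq_sqrt Real.pi_pos.le] at h
    have hNT2ge : 2*π ≤ (n:ℝ)*T^2 := by rw [hNT2]; linarith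
    have hfactpos : (0:ℝ) < ((n-1).factorial : ℝ) := by
      exact_mod_cast (n-1).factorial_pos
    have hT0 : 0 < T := by
      rw [hTeq]
      positivity
    have hE3 := lemE3 T hT0.le
    have h3T : (39:ℝ)/20 ≤ 3 - T := by linarith
    have hprod : 2*π*(39/20) ≤ ((n:ℝ)*T^2)*(3-T) :=
      mul_le_mul hNT2ge h3T (by norm_num) (by positivity)
    have hpi4 : (3.141592:ℝ) < π := Real.pi_gt_d6
    nlinarith [hprod, hpi4,
      mul_le_mul_of_nonneg_left
        (show T^2/2 - T^3/6 ≤ T + Real.exp (-T) - 1 from by linarith [hE3])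
        (by positivity : (0:ℝ) ≤ (n:ℝ))]



theorem stmt_7 (n : ℕ) (hn : 2 ≤ n) (x : ℝ) (hx1 : 1 < x)
    (hx2 : x ≤ Real.exp (Real.Gamma n / (Real.exp (-(n : ℝ)) * (n : ℝ) ^ n))) :
    0 < -2 * Real.exp (-2 * (n : ℝ)) * (n : ℝ) ^ (2 * n - 1) * (Real.Gamma n)⁻¹ ^ 2 *
          (Real.log x) ^ 2 + Real.log x + 1 / x - 1 := by
  have hn0 : 0 < n := by omega
  have hNpos : (0:ℝ) < (n:ℝ) := by exact_mod_cast hn0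
  have hΓ : 0 < Real.Gamma n := Real.Gamma_pos_of_pos hNpos
  set T : ℝ := Real.Gamma n / (Real.exp (-(n:ℝ)) * (n:ℝ)^n) with hT
  have hT0 : 0 < T := by rw [hT]; positivity
  set t : ℝ := Real.log x with ht
  have ht0 : 0 < t := Real.log_pos hx1
  have hx0 : (0:ℝ) < x := by linarith
  have htT : t ≤ T := by
    rw [ht, Real.log_le_iff_le_exp hx0]
    exact hx2
  have hxe : 1/x = Real.exp (-t) := by
    rw [ht, Real.exp_neg, Real.exp_log hx0, one_div]
  rw [hxe]
  have hc : 2 * Real.exp (-2*(n:ℝ)) * (n:ℝ)^(2*n-1) * (Real.Gamma n)⁻¹^2 * ((n:ℝ) * T^2)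
      = 2 := by
    rw [hT]
    have e1 : Real.exp (-(n:ℝ))^2 = Real.exp (-2*(n:ℝ)) := by
      rw [sq, ← Real.exp_add]; ring_nf
    have e2 : ((n:ℝ)^n)^2 = (n:ℝ)^(2*n-1) * (n:ℝ) := by
      rw [← pow_mul, ← pow_succ]
      congr 1
      omega
    have hexp : Real.exp (-(n:ℝ)) ≠ 0 := (Real.exp_pos _).ne'
    field_simp
    rw [show -(2*(n:ℝ)) = -2*(n:ℝ) by ring, ← e1, e2]
    ring
  have hmain : 2 * t^2 < ((t + Real.exp (-t) - 1) * T^2) * (n:ℝ) := by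
    have h1 := qmono t T ht0 htT
    have h2 := endpoint n hn
    rw [← hT] at h2
    have h1' := mul_le_mul_of_nonneg_right h1 hNpos.le
    have h2' := mul_lt_mul_of_pos_right h2 (by positivity : (0:ℝ) < t^2)
    nlinarith [h1', h2']
  have hNT : (0:ℝ) < (n:ℝ)*T^2 := by positivity
  have hfin : 2 * Real.exp (-2*(n:ℝ)) * (n:ℝ)^(2*n-1) * (Real.Gamma n)⁻¹^2 * t^2
      < t + Real.exp (-t) - 1 := by
    rw [← mul_lt_mul_iff_left₀ hNT]
    calc 2 * Real.exp (-2*(n:ℝ)) * (n:ℝ)^(2*n-1) * (Real.Gamma n)⁻¹^2 * t^2 * ((n:ℝ)*T^2)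
        = (2 * Real.exp (-2*(n:ℝ)) * (n:ℝ)^(2*n-1) * (Real.Gamma n)⁻¹^2 * ((n:ℝ)*T^2)) * t^2
          := by ring
      _ = 2 * t^2 := by rw [hc]
      _ < (t + Real.exp (-t) - 1) * ((n:ℝ)*T^2) := by nlinarith [hmain]
  linarith [hfin]
end

section
/- The sequence M₂(n) = n·(Γ(n)/(e^{-n}n^n) + e^{-Γ(n)/(e^{-n}n^n)} − 1) is monotonically increasing in n for natural numbers n ≥ 1, with M₂(1) < 2 and M₂(2) > 2; hence M₂(n) > 2 for all n ≥ 2. -/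
/-!
Write `a n = Γ(n) eⁿ / nⁿ` and `f x = x + e⁻ˣ - 1`, so that `M₂ n = n f(a n)`. The ratio
`r n = a (n+1) / a n = e (n/(n+1))^(n+1)` lies in `[e^(-1/(2n)), 1)`. Since `f` is strictly
convex with `f' x = 1 - e⁻ˣ`, `(n+1) f(a r) > (n+1) (f a - a (1 - r) f' a)`, so
`M₂ n < M₂ (n+1)` as soon as `(n+1)(1 - r n) · a f'(a) ≤ f(a)`. The left factor is at most
`1/2 + a/13`: for `n ≥ 7` this follows from `1 - r n ≤ 1/(2n)` and Stirling's bound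
`n a n ≥ √(2πn)`, for `2 ≤ n ≤ 6` it is a numerical check. On the other side
`(1/2 + a/13) · a f'(a) ≤ f(a)` holds for `0 ≤ a ≤ 19/10`, a range that contains every `a n`
with `n ≥ 2` because `a` decreases from `a 2 = e²/4`. The step from `n = 1` is
`M₂ 1 < 2 < M₂ 2`, checked from the numerical value of `e`.
-/

open Real
open scoped Nat

namespace GammaStirling

noncomputable def expDefect (x : ℝ) : ℝ := x + exp (-x) - 1

theorem expDefect_sub_mul_lt {a b : ℝ} (hba : b < a) :
    expDefect a - (a - b) * (1 - exp (-a)) < expDefect b := by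
  have hexp : exp (-a) * (1 + (a - b)) < exp (-b) := by
    calc exp (-a) * (1 + (a - b)) < exp (-a) * exp (a - b) := by
          gcongr; linarith [add_one_lt_exp (x := a - b) (by linarith)]
      _ = exp (-b) := by rw [← exp_add]; ring_nf
  unfold expDefect
  linarith

theorem sub_one_mul_expDefect_lt {a b c : ℝ} (hba : b < a) (hc : 0 < c)
    (h : c * ((a - b) * (1 - exp (-a))) ≤ expDefect a) :
    (c - 1) * expDefect a < c * expDefect b := by
  nlinarith [mul_lt_mul_of_pos_left (expDefect_sub_mul_lt hba) hc]

theorem exp_le_taylor_five {x : ℝ} (h0 : 0 ≤ x) (h1 : x ≤ 1) :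
    exp x ≤ 1 + x + x ^ 2 / 2 + x ^ 3 / 6 + x ^ 4 / 24 + x ^ 5 / 100 := by
  have h := exp_bound' h0 h1 (n := 5) (by norm_num)
  norm_num [Finset.sum_range_succ, Nat.factorial] at h
  nlinarith [pow_nonneg h0 5]

theorem taylor_five_sq_mul_le {x : ℝ} (h0 : 0 ≤ x) (h1 : x ≤ 19 / 20) :
    (1 + x + x ^ 2 / 2 + x ^ 3 / 6 + x ^ 4 / 24 + x ^ 5 / 100) ^ 2 * (1 - x + 4 * x ^ 2 / 13) ≤
      1 + x + 4 * x ^ 2 / 13 := by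
  set q := 2/39 + 2/39*x - 53/3900*x^2 - 23/936*x^3 - 41/2340*x^4 - 181/20800*x^5
          - 583/187200*x^6 - 967/1170000*x^7 - 61/390000*x^8 - 1/32500*x^9 with hq
  have hdiff : (1 + x + 4 * x ^ 2 / 13) -
      (1 + x + x ^ 2 / 2 + x ^ 3 / 6 + x ^ 4 / 24 + x ^ 5 / 100) ^ 2 * (1 - x + 4 * x ^ 2 / 13)
      = x ^ 3 * q := by
    rw [hq]; ring
  have hpow : ∀ k : ℕ, 2 ≤ k → x ^ k ≤ x ^ 2 := fun k hk =>
    pow_le_pow_of_le_one h0 (h1.trans (by norm_num)) hk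
  have hq0 : 0 ≤ q := by
    nlinarith [hpow 3 (by norm_num), hpow 4 (by norm_num), hpow 5 (by norm_num),
      hpow 6 (by norm_num), hpow 7 (by norm_num), hpow 8 (by norm_num), hpow 9 (by norm_num)]
  nlinarith [mul_nonneg (pow_nonneg h0 3) hq0]

/-- With `12` in place of `13`, `(1 + a/2 + a²/12) / (1 - a/2 + a²/12)` is the `[2/2]` Padé
approximant of `exp`, which lies below it; the coefficient `1/13` trades that for an upper
bound on a bounded range. -/
theorem exp_mul_le_pade {a : ℝ} (h0 : 0 ≤ a) (h1 : a ≤ 19 / 10) :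
    exp a * (1 - a / 2 + a ^ 2 / 13) ≤ 1 + a / 2 + a ^ 2 / 13 := by
  set x := a / 2 with hx
  set p := 1 + x + x ^ 2 / 2 + x ^ 3 / 6 + x ^ 4 / 24 + x ^ 5 / 100
  have hx0 : 0 ≤ x := by positivity
  have hx1 : x ≤ 19 / 20 := by rw [hx]; linarith
  have hexp : exp a ≤ p ^ 2 := by
    rw [show a = x + x by ring, exp_add, ← sq]
    gcongr
    exact exp_le_taylor_five hx0 (by linarith)
  have hden : 0 ≤ 1 - x + 4 * x ^ 2 / 13 := by nlinarith [sq_nonneg (x - 13 / 8)]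
  calc exp a * (1 - a / 2 + a ^ 2 / 13) = exp a * (1 - x + 4 * x ^ 2 / 13) := by ring
    _ ≤ p ^ 2 * (1 - x + 4 * x ^ 2 / 13) := by gcongr
    _ ≤ 1 + x + 4 * x ^ 2 / 13 := taylor_five_sq_mul_le hx0 hx1
    _ = 1 + a / 2 + a ^ 2 / 13 := by ring

theorem mul_one_sub_exp_neg_le_expDefect {a : ℝ} (h0 : 0 ≤ a) (h1 : a ≤ 19 / 10) :
    (1 / 2 + a / 13) * (a * (1 - exp (-a))) ≤ expDefect a := by
  have h := mul_le_mul_of_nonneg_left (exp_mul_le_pade h0 h1) (exp_pos (-a)).le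
  rw [← mul_assoc, ← exp_add, neg_add_cancel, exp_zero, one_mul] at h
  unfold expDefect
  nlinarith

noncomputable def gammaRatio (n : ℕ) : ℝ := Gamma n / (exp (-(n : ℝ)) * (n : ℝ) ^ n)

noncomputable def gammaRatioStep (n : ℕ) : ℝ := exp 1 * (n / (n + 1)) ^ (n + 1)

theorem gammaRatio_eq_factorial {n : ℕ} (hn : n ≠ 0) :
    gammaRatio n = n ! * exp n / (n : ℝ) ^ (n + 1) := by
  have hn' : (n : ℝ) ≠ 0 := by exact_mod_cast hn
  have hfact : (n ! : ℝ) = n * Gamma n := by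
    rw [← Gamma_nat_eq_factorial, Gamma_add_one hn']
  rw [gammaRatio, hfact, exp_neg]
  field_simp
  ring

theorem gammaRatio_pos {n : ℕ} (hn : n ≠ 0) : 0 < gammaRatio n := by
  rw [gammaRatio_eq_factorial hn]
  have : (0 : ℝ) < n := by positivity
  positivity

theorem gammaRatio_succ {n : ℕ} (hn : n ≠ 0) :
    gammaRatio (n + 1) = gammaRatio n * gammaRatioStep n := by
  have hn' : (0 : ℝ) < n := by positivity
  rw [gammaRatio_eq_factorial hn, gammaRatio_eq_factorial n.add_one_ne_zero, gammaRatioStep,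
    Nat.factorial_succ, div_pow]
  push_cast
  rw [exp_add]
  field_simp
  ring

theorem gammaRatio_one : gammaRatio 1 = exp 1 := by
  simp [gammaRatio_eq_factorial]

theorem gammaRatio_two : gammaRatio 2 = exp 2 / 4 := by
  rw [gammaRatio_eq_factorial two_ne_zero]
  norm_num [Nat.factorial]
  ring

theorem sqrt_two_pi_mul_le_mul_gammaRatio {n : ℕ} (hn : n ≠ 0) :
    √(2 * π * n) ≤ n * gammaRatio n := by
  have hn' : (0 : ℝ) < n := by positivity
  have h := Stirling.le_factorial_stirling n
  rw [div_pow, exp_one_pow, ← mul_div_assoc, div_le_iff₀ (by positivity)] at h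
  rw [gammaRatio_eq_factorial hn, ← mul_div_assoc, le_div_iff₀ (by positivity), pow_succ]
  nlinarith

theorem gammaRatioStep_lt_one {n : ℕ} (hn : n ≠ 0) : gammaRatioStep n < 1 := by
  have hn' : (0 : ℝ) < n := by positivity
  have hexp : exp (1 / (n + 1)) * (n / (n + 1)) < 1 := by
    have h : (n : ℝ) / (n + 1) < exp (-(1 / (n + 1))) := by
      have := add_one_lt_exp (x := -(1 / ((n : ℝ) + 1))) (neg_ne_zero.mpr (by positivity))
      rw [show (n : ℝ) / (n + 1) = -(1 / (n + 1)) + 1 by field_simp; ring]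
      exact this
    calc exp (1 / (n + 1)) * (n / (n + 1)) < exp (1 / (n + 1)) * exp (-(1 / (n + 1))) := by
          gcongr
      _ = 1 := by rw [← exp_add, add_neg_cancel, exp_zero]
  calc gammaRatioStep n = (exp (1 / (n + 1)) * (n / (n + 1))) ^ (n + 1) := by
        rw [gammaRatioStep, mul_pow, ← exp_nat_mul]; push_cast; field_simp
    _ < 1 := pow_lt_one₀ (by positivity) hexp (Nat.succ_ne_zero n)

theorem exp_neg_inv_two_mul_le_gammaRatioStep {n : ℕ} (hn : n ≠ 0) :
    exp (-(1 / (2 * n))) ≤ gammaRatioStep n := by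
  have hn' : (0 : ℝ) < n := by positivity
  set s : ℝ := (2 * n + 1) / (2 * n * (n + 1)) with hs
  have hlog : 1 + 1 / (n : ℝ) ≤ exp s := by
    refine le_trans ?_ (quadratic_le_exp_of_nonneg (by positivity))
    have : s + s ^ 2 / 2 - 1 / n = 1 / (8 * n ^ 2 * (n + 1) ^ 2) := by
      rw [hs]; field_simp; ring
    have : (0 : ℝ) < 1 / (8 * n ^ 2 * (n + 1) ^ 2) := by positivity
    linarith
  have hstep : exp (-s) ≤ n / (n + 1) := by
    rw [exp_neg, show (n : ℝ) / (n + 1) = (1 + 1 / (n : ℝ))⁻¹ by field_simp]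
    gcongr
  calc exp (-(1 / (2 * n))) = exp 1 * exp (-s) ^ (n + 1) := by
        rw [← exp_nat_mul, ← exp_add]; congr 1; rw [hs]; push_cast; field_simp; ring
    _ ≤ gammaRatioStep n := by unfold gammaRatioStep; gcongr

theorem succ_mul_one_sub_gammaRatioStep_le_of_le_six {n : ℕ} (hn2 : 2 ≤ n) (hn6 : n ≤ 6) :
    (n + 1) * (1 - gammaRatioStep n) ≤ 1 / 2 + gammaRatio n / 13 := by
  have he : (2.7182818283 : ℝ) ≤ exp 1 := exp_one_gt_d9.le
  have hpow := pow_le_pow_left₀ (by norm_num) he n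
  rw [gammaRatio_eq_factorial (by omega), gammaRatioStep, ← exp_one_pow]
  interval_cases n <;> norm_num [Nat.factorial] at hpow ⊢ <;> nlinarith

theorem succ_mul_one_sub_gammaRatioStep_le_of_seven_le {n : ℕ} (hn : 7 ≤ n) :
    (n + 1) * (1 - gammaRatioStep n) ≤ 1 / 2 + gammaRatio n / 13 := by
  have hn' : (7 : ℝ) ≤ n := by exact_mod_cast hn
  have hstep : 1 - gammaRatioStep n ≤ 1 / (2 * n) := by
    linarith [add_one_le_exp (-(1 / (2 * (n : ℝ)))),
      exp_neg_inv_two_mul_le_gammaRatioStep (n := n) (by omega)]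
  have hstirling : 13 / 2 ≤ n * gammaRatio n := by
    refine le_trans ?_ (sqrt_two_pi_mul_le_mul_gammaRatio (n := n) (by omega))
    rw [le_sqrt (by norm_num) (by positivity)]
    nlinarith [pi_gt_d2]
  calc (n + 1) * (1 - gammaRatioStep n) ≤ (n + 1) * (1 / (2 * n)) := by gcongr
    _ = 1 / 2 + 13 / 2 / n / 13 := by field_simp
    _ ≤ 1 / 2 + gammaRatio n / 13 := by
      gcongr
      rwa [div_le_iff₀ (by positivity), mul_comm]

theorem succ_mul_one_sub_gammaRatioStep_le {n : ℕ} (hn : 2 ≤ n) :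
    (n + 1) * (1 - gammaRatioStep n) ≤ 1 / 2 + gammaRatio n / 13 := by
  rcases le_or_gt n 6 with h | h
  · exact succ_mul_one_sub_gammaRatioStep_le_of_le_six hn h
  · exact succ_mul_one_sub_gammaRatioStep_le_of_seven_le h

theorem gammaRatio_le {n : ℕ} (hn : 2 ≤ n) : gammaRatio n ≤ 19 / 10 := by
  induction n, hn using Nat.le_induction with
  | base =>
    rw [gammaRatio_two, show (2 : ℝ) = 1 + 1 by norm_num, exp_add]
    nlinarith [exp_one_lt_d9, exp_one_gt_d9]
  | succ n hn ih =>
    rw [gammaRatio_succ (by omega)]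
    nlinarith [gammaRatio_pos (n := n) (by omega), gammaRatioStep_lt_one (n := n) (by omega)]

noncomputable def M₂ (n : ℕ) : ℝ := n * expDefect (gammaRatio n)

theorem M₂_one_lt_two : M₂ 1 < 2 := by
  have hexp : exp (-exp 1) < 1 / 4 := by
    rw [exp_neg, inv_lt_comm₀ (exp_pos _) (by norm_num)]
    nlinarith [quadratic_le_exp_of_nonneg (exp_pos 1).le, exp_one_gt_d9]
  rw [M₂, gammaRatio_one, expDefect]
  norm_num
  linarith [exp_one_lt_d9]

theorem two_lt_M₂_two : 2 < M₂ 2 := by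
  rw [M₂, gammaRatio_two, expDefect]
  have hE : 7.38 < exp 2 := by
    rw [show (2 : ℝ) = 1 + 1 by norm_num, exp_add]; nlinarith [exp_one_gt_d9]
  have hexp : 3 - exp 2 / 4 ≤ exp 2 * exp (-(exp 2 / 4)) := by
    rw [← exp_add]
    linarith [add_one_le_exp (2 + -(exp 2 / 4))]
  push_cast
  nlinarith [exp_pos (-(exp 2 / 4))]

theorem M₂_lt_M₂_succ {n : ℕ} (hn : 1 ≤ n) : M₂ n < M₂ (n + 1) := by
  rcases hn.eq_or_lt with rfl | hn
  · exact M₂_one_lt_two.trans two_lt_M₂_two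
  set a := gammaRatio n
  have ha : 0 < a := gammaRatio_pos (by omega)
  have hr : gammaRatioStep n < 1 := gammaRatioStep_lt_one (by omega)
  have hexp : 0 ≤ 1 - exp (-a) := by simp [ha.le]
  have hkey : ((n : ℝ) + 1) * ((a - a * gammaRatioStep n) * (1 - exp (-a))) ≤ expDefect a :=
    calc ((n : ℝ) + 1) * ((a - a * gammaRatioStep n) * (1 - exp (-a)))
        = ((n + 1) * (1 - gammaRatioStep n)) * (a * (1 - exp (-a))) := by ring
      _ ≤ (1 / 2 + a / 13) * (a * (1 - exp (-a))) := by
          gcongr; exact succ_mul_one_sub_gammaRatioStep_le hn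
      _ ≤ expDefect a := mul_one_sub_exp_neg_le_expDefect ha.le (gammaRatio_le hn)
  have := sub_one_mul_expDefect_lt (by nlinarith) (by positivity) hkey
  rw [M₂, M₂, gammaRatio_succ (by omega)]
  push_cast
  simpa using this

theorem M₂_lt_M₂ {m n : ℕ} (hm : 1 ≤ m) (hmn : m < n) : M₂ m < M₂ n := by
  induction n, hmn using Nat.le_induction with
  | base => exact M₂_lt_M₂_succ hm
  | succ n hn ih => exact ih.trans (M₂_lt_M₂_succ (by omega))

end GammaStirling

open GammaStirling in
theorem stmt_8 :
    (∀ m n : ℕ, 1 ≤ m → m < n →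
      (m : ℝ) * (Real.Gamma m / (Real.exp (-(m : ℝ)) * (m : ℝ) ^ m) +
          Real.exp (-(Real.Gamma m / (Real.exp (-(m : ℝ)) * (m : ℝ) ^ m))) - 1) <
      (n : ℝ) * (Real.Gamma n / (Real.exp (-(n : ℝ)) * (n : ℝ) ^ n) +
          Real.exp (-(Real.Gamma n / (Real.exp (-(n : ℝ)) * (n : ℝ) ^ n))) - 1)) ∧
    ((1 : ℝ) * (Real.Gamma 1 / (Real.exp (-(1 : ℝ)) * (1 : ℝ) ^ (1 : ℕ)) +
        Real.exp (-(Real.Gamma 1 / (Real.exp (-(1 : ℝ)) * (1 : ℝ) ^ (1 : ℕ)))) - 1) < 2) ∧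
    (2 < (2 : ℝ) * (Real.Gamma 2 / (Real.exp (-(2 : ℝ)) * (2 : ℝ) ^ (2 : ℕ)) +
        Real.exp (-(Real.Gamma 2 / (Real.exp (-(2 : ℝ)) * (2 : ℝ) ^ (2 : ℕ)))) - 1)) ∧
    ∀ n : ℕ, 2 ≤ n →
      2 < (n : ℝ) * (Real.Gamma n / (Real.exp (-(n : ℝ)) * (n : ℝ) ^ n) +
          Real.exp (-(Real.Gamma n / (Real.exp (-(n : ℝ)) * (n : ℝ) ^ n))) - 1) := by
  refine ⟨fun m n hm hmn => M₂_lt_M₂ hm hmn, ?_, ?_, fun n hn => ?_⟩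
  · simpa [M₂, gammaRatio, expDefect] using M₂_one_lt_two
  · simpa [M₂, gammaRatio, expDefect] using two_lt_M₂_two
  · rcases hn.eq_or_lt with rfl | hn
    · exact two_lt_M₂_two
    · exact two_lt_M₂_two.trans (M₂_lt_M₂ one_le_two hn)
end

section
/- Let n ≥ 2 be a natural number. Define for x > 0: ξ^l(x) = max(0, 1 − (e^{-n}n^n/Γ(n))·ln(1+x)) and ξ^{KL}(x) = 1 − √((n/2)·(ln(1+x) + 1/(1+x) − 1)). Then ξ^l(x) > ξ^{KL}(x) for all x > 0. -/
open Real Filter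


lemma aux_nonneg (g g' : ℝ → ℝ) (hd : ∀ t, HasDerivAt g (g' t) t)
    (h0 : 0 ≤ g 0) (h' : ∀ t, 0 ≤ t → 0 ≤ g' t) : ∀ t, 0 ≤ t → 0 ≤ g t := by
  intro t ht
  have hmono : MonotoneOn g (Set.Ici (0:ℝ)) := by
    apply monotoneOn_of_deriv_nonneg (convex_Ici 0)
    · exact (fun x _ => (hd x).differentiableAt.continuousAt.continuousWithinAt)
    · intro x hx
      exact ((hd x).differentiableAt.differentiableWithinAt)
    · intro x hx
      rw [interior_Ici] at hx
      rw [(hd x).deriv]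
      exact h' x (le_of_lt hx)
  have := hmono (Set.self_mem_Ici) (Set.mem_Ici.mpr ht) ht
  linarith

lemma hde (t : ℝ) : HasDerivAt (fun s : ℝ => Real.exp (-s)) (-Real.exp (-t)) t := by
  simpa using (hasDerivAt_neg t).exp

lemma hdp (a1 a2 a3 a4 a5 a6 a7 : ℝ) (t : ℝ) :
    HasDerivAt (fun s : ℝ => a1*s + a2*s^2 + a3*s^3 + a4*s^4 + a5*s^5 + a6*s^6 + a7*s^7)
      (a1 + 2*a2*t + 3*a3*t^2 + 4*a4*t^3 + 5*a5*t^4 + 6*a6*t^5 + 7*a7*t^6) t := by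
  have h : ∀ (k : ℕ) (a : ℝ), HasDerivAt (fun s : ℝ => a * s^k) (a * (k * t^(k-1))) t :=
    fun k a => (hasDerivAt_pow k t).const_mul a
  have := ((((((h 1 a1).fun_add (h 2 a2)).fun_add (h 3 a3)).fun_add (h 4 a4)).fun_add (h 5 a5)).fun_add (h 6 a6)).fun_add (h 7 a7)
  simp only [pow_one] at this
  exact this.congr_deriv (by norm_num; ring)

lemma exp_le_poly (a1 a2 a3 a4 a5 a6 a7 : ℝ)
    (h' : ∀ t : ℝ, 0 ≤ t →
      0 ≤ (a1 + 2*a2*t + 3*a3*t^2 + 4*a4*t^3 + 5*a5*t^4 + 6*a6*t^5 + 7*a7*t^6) + Real.exp (-t)) :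
    ∀ t : ℝ, 0 ≤ t →
      Real.exp (-t) ≤ 1 + (a1*t + a2*t^2 + a3*t^3 + a4*t^4 + a5*t^5 + a6*t^6 + a7*t^7) := by
  intro t ht
  have := aux_nonneg
    (fun s => (a1*s + a2*s^2 + a3*s^3 + a4*s^4 + a5*s^5 + a6*s^6 + a7*s^7) - Real.exp (-s) + 1)
    (fun s => (a1 + 2*a2*s + 3*a3*s^2 + 4*a4*s^3 + 5*a5*s^4 + 6*a6*s^5 + 7*a7*s^6) + Real.exp (-s))
    (fun s => by
      have := ((hdp a1 a2 a3 a4 a5 a6 a7 s).fun_sub (hde s)).add_const 1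
      exact this.congr_deriv (by ring))
    (by norm_num) h' t ht
  linarith

lemma poly_le_exp (a1 a2 a3 a4 a5 a6 a7 : ℝ)
    (h' : ∀ t : ℝ, 0 ≤ t →
      Real.exp (-t) ≤ -(a1 + 2*a2*t + 3*a3*t^2 + 4*a4*t^3 + 5*a5*t^4 + 6*a6*t^5 + 7*a7*t^6)) :
    ∀ t : ℝ, 0 ≤ t →
      1 + (a1*t + a2*t^2 + a3*t^3 + a4*t^4 + a5*t^5 + a6*t^6 + a7*t^7) ≤ Real.exp (-t) := by
  intro t ht
  have := aux_nonneg
    (fun s => Real.exp (-s) - (a1*s + a2*s^2 + a3*s^3 + a4*s^4 + a5*s^5 + a6*s^6 + a7*s^7) - 1)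
    (fun s => -Real.exp (-s) - (a1 + 2*a2*s + 3*a3*s^2 + 4*a4*s^3 + 5*a5*s^4 + 6*a6*s^5 + 7*a7*s^6))
    (fun s => by
      have := ((hde s).fun_sub (hdp a1 a2 a3 a4 a5 a6 a7 s)).sub_const 1
      convert this using 1)
    (by norm_num)
    (fun s hs => by have := h' s hs; linarith) t ht
  linarith

lemma E2 : ∀ t : ℝ, 0 ≤ t → Real.exp (-t) ≤ 1 + ((-1)*t + (1/2)*t^2 + 0*t^3 + 0*t^4 + 0*t^5 + 0*t^6 + 0*t^7) := by
  apply exp_le_poly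
  intro t ht
  have := Real.add_one_le_exp (-t)
  nlinarith

lemma E3 : ∀ t : ℝ, 0 ≤ t → 1 + ((-1)*t + (1/2)*t^2 + (-1/6)*t^3 + 0*t^4 + 0*t^5 + 0*t^6 + 0*t^7) ≤ Real.exp (-t) := by
  apply poly_le_exp
  intro t ht
  have := E2 t ht
  nlinarith

lemma E4 : ∀ t : ℝ, 0 ≤ t → Real.exp (-t) ≤ 1 + ((-1)*t + (1/2)*t^2 + (-1/6)*t^3 + (1/24)*t^4 + 0*t^5 + 0*t^6 + 0*t^7) := by
  apply exp_le_poly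
  intro t ht
  have := E3 t ht
  nlinarith

lemma E5 : ∀ t : ℝ, 0 ≤ t → 1 + ((-1)*t + (1/2)*t^2 + (-1/6)*t^3 + (1/24)*t^4 + (-1/120)*t^5 + 0*t^6 + 0*t^7) ≤ Real.exp (-t) := by
  apply poly_le_exp
  intro t ht
  have := E4 t ht
  nlinarith

lemma E6 : ∀ t : ℝ, 0 ≤ t → Real.exp (-t) ≤ 1 + ((-1)*t + (1/2)*t^2 + (-1/6)*t^3 + (1/24)*t^4 + (-1/120)*t^5 + (1/720)*t^6 + 0*t^7) := by
  apply exp_le_poly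
  intro t ht
  have := E5 t ht
  nlinarith

lemma E7 : ∀ t : ℝ, 0 ≤ t →
    1 - t + t^2/2 - t^3/6 + t^4/24 - t^5/120 + t^6/720 - t^7/5040 ≤ Real.exp (-t) := by
  intro t ht
  have := poly_le_exp (-1) (1/2) (-1/6) (1/24) (-1/120) (1/720) (-1/5040)
    (fun s hs => by have := E6 s hs; nlinarith) t ht
  linarith


lemma Qdec {a b : ℝ} (ha : 0 ≤ a) (hab : a ≤ b) (hb : b ≤ 2) :
    1/2 - b/6 + b^2/24 - b^3/120 + b^4/720 - b^5/5040 ≤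
    1/2 - a/6 + a^2/24 - a^3/120 + a^4/720 - a^5/5040 := by
  nlinarith [mul_nonneg (sub_nonneg.mpr hab) (sub_nonneg.mpr hb),
    mul_nonneg (mul_nonneg (sub_nonneg.mpr hab) ha) (sub_nonneg.mpr hb),
    mul_nonneg (mul_nonneg (sub_nonneg.mpr hab) (mul_nonneg ha ha)) (sub_nonneg.mpr hb),
    mul_nonneg (mul_nonneg (sub_nonneg.mpr hab) (mul_nonneg (le_trans ha hab) (le_trans ha hab))) (sub_nonneg.mpr hb),
    mul_nonneg (mul_nonneg (mul_nonneg (sub_nonneg.mpr hab) ha) (le_trans ha hab)) (sub_nonneg.mpr hb),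
    mul_nonneg (sub_nonneg.mpr hab) (mul_nonneg (mul_nonneg ha ha) (mul_nonneg ha ha)),
    mul_nonneg (sub_nonneg.mpr hab) (mul_nonneg (mul_nonneg (le_trans ha hab) (le_trans ha hab)) (mul_nonneg (le_trans ha hab) (le_trans ha hab))),
    mul_nonneg (mul_nonneg (sub_nonneg.mpr hab) ha) (mul_nonneg (mul_nonneg ha (le_trans ha hab)) (le_trans ha hab)),
    sq_nonneg (a-b), sq_nonneg (a+b), mul_nonneg ha (le_trans ha hab)]

lemma fmono {T t : ℝ} (hT : 0 ≤ T) (h : T < t) :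
    T + Real.exp (-T) - 1 < t + Real.exp (-t) - 1 := by
  have h1 : Real.exp (-T) ≤ 1 := Real.exp_le_one_iff.mpr (by linarith)
  have h2 : Real.exp (-(t-T)) ≤ 1 := Real.exp_le_one_iff.mpr (by linarith)
  have h3 : (-(t-T)) + 1 < Real.exp (-(t-T)) := Real.add_one_lt_exp (by intro hc; nlinarith)
  have h4 : Real.exp (-t) = Real.exp (-T) * Real.exp (-(t-T)) := by
    rw [← Real.exp_add]; ring_nf
  have h5 : (0:ℝ) < Real.exp (-T) := Real.exp_pos _
  nlinarith [mul_nonneg (sub_nonneg.mpr h2) (sub_nonneg.mpr h1)]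

lemma master (n : ℕ) (hn : 0 < n) (c T Cu : ℝ) (hc0 : 0 < c)
    (hc2 : c^2 ≤ Cu) (hcT : 1 ≤ c*T) (hT2 : T ≤ 2)
    (hQ : Cu < ((n:ℝ)/2) * (1/2 - T/6 + T^2/24 - T^3/120 + T^4/720 - T^5/5040))
    (t : ℝ) (ht : 0 < t) :
    1 - Real.sqrt (((n:ℝ)/2) * (t + Real.exp (-t) - 1)) < max 0 (1 - c * t) := by
  have hT0 : 0 < T := by nlinarith
  have hn0 : (0:ℝ) < (n:ℝ)/2 := by positivity
  have hfT : T^2 * (1/2 - T/6 + T^2/24 - T^3/120 + T^4/720 - T^5/5040) ≤ T + Real.exp (-T) - 1 := by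
    have := E7 T hT0.le
    nlinarith
  rcases le_or_gt t T with hcase | hcase
  · -- t ≤ T : show sqrt A > c * t
    have hq := Qdec ht.le hcase hT2
    have hft : t^2 * (1/2 - t/6 + t^2/24 - t^3/120 + t^4/720 - t^5/5040) ≤ t + Real.exp (-t) - 1 := by
      have := E7 t ht.le
      nlinarith
    have ht2 : (0:ℝ) < t^2 := by positivity
    have h1 : Cu < ((n:ℝ)/2) * (1/2 - t/6 + t^2/24 - t^3/120 + t^4/720 - t^5/5040) :=
      lt_of_lt_of_le hQ (by nlinarith)
    have hA : (c*t)^2 < ((n:ℝ)/2) * (t + Real.exp (-t) - 1) := by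
      calc (c*t)^2 = c^2 * t^2 := by ring
        _ ≤ Cu * t^2 := by nlinarith
        _ < (((n:ℝ)/2) * (1/2 - t/6 + t^2/24 - t^3/120 + t^4/720 - t^5/5040)) * t^2 :=
            mul_lt_mul_of_pos_right h1 ht2
        _ = ((n:ℝ)/2) * (t^2 * (1/2 - t/6 + t^2/24 - t^3/120 + t^4/720 - t^5/5040)) := by ring
        _ ≤ ((n:ℝ)/2) * (t + Real.exp (-t) - 1) := by
            exact mul_le_mul_of_nonneg_left hft hn0.le
    have hsq : c * t < Real.sqrt (((n:ℝ)/2) * (t + Real.exp (-t) - 1)) :=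
      (Real.lt_sqrt (by positivity)).mpr hA
    have : 1 - c*t ≤ max 0 (1 - c*t) := le_max_right _ _
    linarith
  · -- t > T : show A > 1
    have hT2' : (0:ℝ) < T^2 := by positivity
    have h2 : Cu * T^2 < ((n:ℝ)/2) * (T^2 * (1/2 - T/6 + T^2/24 - T^3/120 + T^4/720 - T^5/5040)) := by
      calc Cu * T^2 < (((n:ℝ)/2) * (1/2 - T/6 + T^2/24 - T^3/120 + T^4/720 - T^5/5040)) * T^2 :=
            mul_lt_mul_of_pos_right hQ hT2'
        _ = ((n:ℝ)/2) * (T^2 * (1/2 - T/6 + T^2/24 - T^3/120 + T^4/720 - T^5/5040)) := by ring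
    have hA : 1 < ((n:ℝ)/2) * (t + Real.exp (-t) - 1) := by
      have h3 : 1 ≤ c^2 * T^2 := by
        nlinarith [mul_le_mul hcT hcT zero_le_one (mul_pos hc0 hT0).le]
      have h4 : c^2 * T^2 ≤ Cu * T^2 := mul_le_mul_of_nonneg_right hc2 (sq_nonneg T)
      have h5 : ((n:ℝ)/2) * (T + Real.exp (-T) - 1) < ((n:ℝ)/2) * (t + Real.exp (-t) - 1) :=
        mul_lt_mul_of_pos_left (fmono hT0.le hcase) hn0
      have h6 : ((n:ℝ)/2) * (T^2 * (1/2 - T/6 + T^2/24 - T^3/120 + T^4/720 - T^5/5040)) ≤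
          ((n:ℝ)/2) * (T + Real.exp (-T) - 1) := mul_le_mul_of_nonneg_left hfT hn0.le
      linarith
    have hsq : 1 < Real.sqrt (((n:ℝ)/2) * (t + Real.exp (-t) - 1)) :=
      (Real.lt_sqrt (by norm_num)).mpr (by rw [one_pow]; exact hA)
    have : (0:ℝ) ≤ max 0 (1 - c*t) := le_max_left _ _
    linarith


lemma exp_one_le_pow (k : ℕ) (hk : 1 ≤ k) : Real.exp 1 ≤ (((k:ℝ)+1)/k)^(k+1) := by
  have hk0 : (0:ℝ) < k := by exact_mod_cast hk
  have h1 : (k:ℝ)/((k:ℝ)+1) ≤ Real.exp (-(1/((k:ℝ)+1))) := by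
    have h := Real.add_one_le_exp (-(1/((k:ℝ)+1)))
    have h2 : -(1/((k:ℝ)+1)) + 1 = (k:ℝ)/((k:ℝ)+1) := by field_simp; ring
    linarith
  have h3 : Real.exp (1/((k:ℝ)+1)) ≤ ((k:ℝ)+1)/k := by
    rw [show (1/((k:ℝ)+1)) = -(-(1/((k:ℝ)+1))) by ring, Real.exp_neg]
    rw [inv_le_comm₀ (Real.exp_pos _) (by positivity)]
    calc (((k:ℝ)+1)/k)⁻¹ = (k:ℝ)/((k:ℝ)+1) := by field_simp
      _ ≤ Real.exp (-(1/((k:ℝ)+1))) := h1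
  calc Real.exp 1 = Real.exp (1/((k:ℝ)+1)) ^ (k+1) := by
        rw [← Real.exp_nat_mul]
        congr 1
        push_cast
        field_simp
    _ ≤ (((k:ℝ)+1)/k)^(k+1) := pow_le_pow_left₀ (Real.exp_pos _).le h3 (k+1)

lemma cs_step (m : ℕ) :
    Real.exp (-((m:ℝ)+1)) * ((m:ℝ)+1)^(m+1) / (Nat.factorial m) ≤
    Real.exp (-((m:ℝ)+2)) * ((m:ℝ)+2)^(m+2) / (Nat.factorial (m+1)) := by
  have hk := exp_one_le_pow (m+1) (by omega)
  have hfm : (0:ℝ) < (Nat.factorial m : ℝ) := by exact_mod_cast Nat.factorial_pos m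
  have hfm1 : ((Nat.factorial (m+1) : ℕ) : ℝ) = ((m:ℝ)+1) * (Nat.factorial m) := by
    rw [Nat.factorial_succ]; push_cast; ring
  rw [div_le_div_iff₀ (by positivity) (by positivity), hfm1]
  have hexp : Real.exp (-((m:ℝ)+1)) = Real.exp (-((m:ℝ)+2)) * Real.exp 1 := by
    rw [← Real.exp_add]; ring_nf
  push_cast at hk
  have hkey : Real.exp 1 * ((m:ℝ)+1)^(m+2) ≤ ((m:ℝ)+2)^(m+2) := by
    have h2 : (((m:ℝ)+1+1)/((m:ℝ)+1))^(m+2) = ((m:ℝ)+2)^(m+2) / ((m:ℝ)+1)^(m+2) := by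
      rw [div_pow]
      ring_nf
    have h3 := hk
    rw [show ((m:ℕ)+1+1) = (m+2) by omega] at h3
    have h4 : (((m:ℝ)+1+1)/((m:ℝ)+1))^(m+2) ≤ ((m:ℝ)+2)^(m+2) / ((m:ℝ)+1)^(m+2) := le_of_eq h2
    have h5 : Real.exp 1 ≤ ((m:ℝ)+2)^(m+2) / ((m:ℝ)+1)^(m+2) := by
      calc Real.exp 1 ≤ (((m:ℝ)+1+1)/((m:ℝ)+1))^(m+2) := by exact_mod_cast h3
        _ = ((m:ℝ)+2)^(m+2) / ((m:ℝ)+1)^(m+2) := h2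
    rw [le_div_iff₀ (by positivity)] at h5
    linarith
  calc Real.exp (-((m:ℝ)+1)) * ((m:ℝ)+1)^(m+1) * (((m:ℝ)+1) * (Nat.factorial m))
      = (Real.exp (-((m:ℝ)+2)) * (Nat.factorial m)) * (Real.exp 1 * ((m:ℝ)+1)^(m+2)) := by
        rw [hexp]; ring
    _ ≤ (Real.exp (-((m:ℝ)+2)) * (Nat.factorial m)) * ((m:ℝ)+2)^(m+2) := by
        apply mul_le_mul_of_nonneg_left hkey (by positivity)
    _ = Real.exp (-((m:ℝ)+2)) * ((m:ℝ)+2)^(m+2) * (Nat.factorial m) := by ring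

lemma cs_ge (m : ℕ) (hm : 5 ≤ m) :
    (24/25 : ℝ) ≤ Real.exp (-((m:ℝ)+1)) * ((m:ℝ)+1)^(m+1) / (Nat.factorial m) := by
  induction m, hm using Nat.le_induction with
  | base =>
    have hU : Real.exp 1 < 2.7182818286 := Real.exp_one_lt_d9
    have h6 : Real.exp (6:ℝ) = (Real.exp 1)^6 := by
      rw [← Real.exp_nat_mul]; norm_num
    have h6' : (Real.exp 1)^6 < 405 := by
      calc (Real.exp 1)^6 < 2.7182818286^6 :=
            pow_lt_pow_left₀ hU (Real.exp_pos 1).le (by norm_num)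
        _ < 405 := by norm_num
    have hpos : (0:ℝ) < Real.exp 6 := Real.exp_pos _
    have hfact : (Nat.factorial 5 : ℝ) = 120 := by norm_num [Nat.factorial]
    have hval : Real.exp (-((5:ℕ):ℝ)+(-1)) = (Real.exp 6)⁻¹ := by
      rw [← Real.exp_neg]; norm_num
    push_cast
    rw [hfact]
    have : Real.exp (-(5+1):ℝ) = (Real.exp 6)⁻¹ := by rw [← Real.exp_neg]; norm_num
    rw [show (-((5:ℝ)+1)) = -(6:ℝ) by norm_num, Real.exp_neg]
    rw [show ((5:ℝ)+1)^6 = 46656 by norm_num]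
    rw [div_le_div_iff₀ (by norm_num) (by norm_num : (0:ℝ) < 120), inv_mul_eq_div,
      div_mul_eq_mul_div, le_div_iff₀ hpos]
    nlinarith [h6 ▸ h6']
  | succ k hk ih =>
    calc (24/25:ℝ) ≤ Real.exp (-((k:ℝ)+1)) * ((k:ℝ)+1)^(k+1) / (Nat.factorial k) := ih
      _ ≤ Real.exp (-((k:ℝ)+2)) * ((k:ℝ)+2)^(k+2) / (Nat.factorial (k+1)) := cs_step k
      _ = Real.exp (-((((k+1):ℕ):ℝ)+1)) * ((((k+1):ℕ):ℝ)+1)^((k+1)+1) / (Nat.factorial (k+1)) := by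
        push_cast
        ring_nf


lemma stirling_fact (n : ℕ) (hn : 1 ≤ n) : Real.sqrt π ≤ Stirling.stirlingSeq n := by
  obtain ⟨k, rfl⟩ : ∃ k, n = k + 1 := ⟨n - 1, by omega⟩
  have htend : Tendsto (Stirling.stirlingSeq ∘ Nat.succ) atTop (nhds (Real.sqrt π)) := by
    apply Stirling.tendsto_stirlingSeq_sqrt_pi.comp
    exact tendsto_add_atTop_nat 1
  exact Stirling.stirlingSeq'_antitone.le_of_tendsto htend k

lemma stirling_bound (m : ℕ) :
    (Real.exp (-(((m+1:ℕ)):ℝ)) * (((m+1:ℕ)):ℝ)^(m+1) / (Nat.factorial m))^2 ≤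
      (((m+1:ℕ)):ℝ)/(2*Real.pi) := by
  set n := m + 1 with hn
  have hN : (0:ℝ) < ((n:ℕ):ℝ) := by positivity
  have hfm : (0:ℝ) < (Nat.factorial m : ℝ) := by exact_mod_cast Nat.factorial_pos m
  have h1 : Real.sqrt π ≤ Stirling.stirlingSeq n := stirling_fact n (by omega)
  have hd : (0:ℝ) < Real.sqrt (2*((n:ℕ):ℝ)) * (((n:ℕ):ℝ)/Real.exp 1)^n := by positivity
  have h2 : Real.sqrt π * (Real.sqrt (2*((n:ℕ):ℝ)) * (((n:ℕ):ℝ)/Real.exp 1)^n) ≤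
      (Nat.factorial n : ℝ) := by
    rw [Stirling.stirlingSeq] at h1
    exact (le_div_iff₀ hd).mp h1
  have hA : (((n:ℕ):ℝ)/Real.exp 1)^n = ((n:ℕ):ℝ)^n * Real.exp (-((n:ℕ):ℝ)) := by
    rw [div_pow, Real.exp_neg, ← Real.exp_nat_mul, mul_one, div_eq_mul_inv]
  have hfac : (Nat.factorial n : ℝ) = ((n:ℕ):ℝ) * (Nat.factorial m : ℝ) := by
    rw [hn, Nat.factorial_succ]; push_cast; ring
  have hsp : (0:ℝ) < Real.sqrt π * Real.sqrt (2*((n:ℕ):ℝ)) := by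
    have := Real.pi_pos; positivity
  have hc_le : Real.exp (-((n:ℕ):ℝ)) * ((n:ℕ):ℝ)^n / (Nat.factorial m) ≤
      ((n:ℕ):ℝ)/(Real.sqrt π * Real.sqrt (2*((n:ℕ):ℝ))) := by
    rw [div_le_div_iff₀ hfm hsp]
    have h3 : Real.sqrt π * (Real.sqrt (2*((n:ℕ):ℝ)) * (((n:ℕ):ℝ)^n * Real.exp (-((n:ℕ):ℝ)))) ≤
        ((n:ℕ):ℝ) * (Nat.factorial m : ℝ) := by
      rw [← hA, ← hfac]; exact h2
    nlinarith [h3]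
  have hc0 : (0:ℝ) ≤ Real.exp (-((n:ℕ):ℝ)) * ((n:ℕ):ℝ)^n / (Nat.factorial m) := by positivity
  calc (Real.exp (-((n:ℕ):ℝ)) * ((n:ℕ):ℝ)^n / (Nat.factorial m))^2
      ≤ (((n:ℕ):ℝ)/(Real.sqrt π * Real.sqrt (2*((n:ℕ):ℝ))))^2 := pow_le_pow_left₀ hc0 hc_le 2
    _ = ((n:ℕ):ℝ)^2/(π*(2*((n:ℕ):ℝ))) := by
        rw [div_pow, mul_pow, Real.sq_sqrt Real.pi_pos.le, Real.sq_sqrt (by positivity)]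
    _ = ((n:ℕ):ℝ)/(2*π) := by
        field_simp

lemma numeric_case_s10 (n : ℕ) (hn : 0 < n) (A F T Cu : ℝ) (hA : 0 < A) (hF : 0 < F)
    (hc2 : A^2 ≤ Cu * F^2 * (2.7182818283:ℝ)^(2*n))
    (hcT : (2.7182818286:ℝ)^n * F ≤ A * T)
    (hT2 : T ≤ 2)
    (hQ : Cu < ((n:ℝ)/2) * (1/2 - T/6 + T^2/24 - T^3/120 + T^4/720 - T^5/5040))
    (t : ℝ) (ht : 0 < t) :
    1 - Real.sqrt (((n:ℝ)/2) * (t + Real.exp (-t) - 1)) < max 0 (1 - (Real.exp (-(n:ℝ)) * A / F) * t) := by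
  have hE : Real.exp (-(n:ℝ)) = ((Real.exp 1)^n)⁻¹ := by
    rw [Real.exp_neg, ← Real.exp_nat_mul, mul_one]
  have hEL : (2.7182818283:ℝ)^n ≤ (Real.exp 1)^n :=
    pow_le_pow_left₀ (by norm_num) Real.exp_one_gt_d9.le n
  have hEU : (Real.exp 1)^n ≤ (2.7182818286:ℝ)^n :=
    pow_le_pow_left₀ (Real.exp_pos 1).le Real.exp_one_lt_d9.le n
  have hEpos : (0:ℝ) < (Real.exp 1)^n := by positivity
  have hELp : (0:ℝ) < (2.7182818283:ℝ)^(2*n) := by positivity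
  have hCu : 0 < Cu := by nlinarith [pow_pos hA 2, pow_pos hF 2, mul_pos (pow_pos hF 2) hELp]
  apply master n hn _ T Cu ?_ ?_ ?_ hT2 hQ t ht
  · rw [hE]; positivity
  · rw [hE]
    have h1 : (((Real.exp 1)^n)⁻¹ * A / F)^2 = A^2 / (((Real.exp 1)^n)^2 * F^2) := by
      field_simp
    rw [h1, div_le_iff₀ (by positivity)]
    have h2 : (2.7182818283:ℝ)^(2*n) ≤ ((Real.exp 1)^n)^2 := by
      rw [mul_comm 2 n, pow_mul]
      exact pow_le_pow_left₀ (by positivity) hEL 2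
    nlinarith [mul_le_mul_of_nonneg_left h2 (mul_pos hCu (pow_pos hF 2)).le]
  · rw [hE]
    have h1 : ((Real.exp 1)^n)⁻¹ * A / F * T = (A*T)/((Real.exp 1)^n * F) := by
      field_simp
    rw [h1, le_div_iff₀ (by positivity)]
    nlinarith [mul_le_mul_of_nonneg_right hEU hF.le]

theorem stmt_10 (n : ℕ) (hn : 2 ≤ n) (x : ℝ) (hx : 0 < x) :
    1 - Real.sqrt (((n : ℝ) / 2) * (Real.log (1 + x) + 1 / (1 + x) - 1)) <
      max 0 (1 - (Real.exp (-(n : ℝ)) * (n : ℝ) ^ n / Real.Gamma n) * Real.log (1 + x)) := by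
  have hx1 : (0:ℝ) < 1 + x := by linarith
  have ht : 0 < Real.log (1+x) := Real.log_pos (by linarith)
  have hsub : 1/(1+x) = Real.exp (-(Real.log (1+x))) := by
    rw [Real.exp_neg, Real.exp_log hx1, one_div]
  rw [hsub]
  set t := Real.log (1+x) with htdef
  obtain ⟨m, rfl⟩ : ∃ m, n = m + 1 := ⟨n - 1, by omega⟩
  have hΓ : Real.Gamma (((m+1:ℕ)):ℝ) = (Nat.factorial m : ℝ) := by
    push_cast
    exact Real.Gamma_nat_eq_factorial m
  rw [hΓ]
  rcases lt_or_ge m 5 with hm | hm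
  · have hm1 : 1 ≤ m := by omega
    interval_cases m
    · apply numeric_case_s10 2 (by norm_num) _ _ (184727/100000) (293051/1000000)
        (by norm_num) (by norm_num [Nat.factorial]) ?_ ?_ (by norm_num) ?_ t ht
      · norm_num [Nat.factorial]
      · norm_num [Nat.factorial]
      · norm_num
    · apply numeric_case_s10 3 (by norm_num) _ _ (74391/50000) (451753/1000000)
        (by norm_num) (by norm_num [Nat.factorial]) ?_ ?_ (by norm_num) ?_ t ht
      · norm_num [Nat.factorial]
      · norm_num [Nat.factorial]
      · norm_num
    · apply numeric_case_s10 4 (by norm_num) _ _ (25593/20000) (152673/250000)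
        (by norm_num) (by norm_num [Nat.factorial]) ?_ ?_ (by norm_num) ?_ t ht
      · norm_num [Nat.factorial]
      · norm_num [Nat.factorial]
      · norm_num
    · apply numeric_case_s10 5 (by norm_num) _ _ (56991/50000) (19243/25000)
        (by norm_num) (by norm_num [Nat.factorial]) ?_ ?_ (by norm_num) ?_ t ht
      · norm_num [Nat.factorial]
      · norm_num [Nat.factorial]
      · norm_num
  · -- n = m+1 ≥ 6
    set c := Real.exp (-(((m+1:ℕ)):ℝ)) * (((m+1:ℕ)):ℝ)^(m+1) / (Nat.factorial m : ℝ) with hcdef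
    have hfm : (0:ℝ) < (Nat.factorial m : ℝ) := by exact_mod_cast Nat.factorial_pos m
    have hc0 : 0 < c := by rw [hcdef]; positivity
    have hcge : (24/25:ℝ) ≤ c := by
      have := cs_ge m hm
      rw [hcdef]
      push_cast
      convert this using 2 <;> push_cast <;> ring
    apply master (m+1) (by omega) c (1/c) (((m+1:ℕ):ℝ)/(2*Real.pi)) hc0 ?_ ?_ ?_ ?_ t ht
    · exact stirling_bound m
    · rw [mul_one_div, div_self hc0.ne']
    · rw [div_le_iff₀ hc0]
      nlinarith
    · -- n/(2π) < (n/2) * Q(1/c)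
      have hinv : 1/c ≤ 25/24 := by
        rw [div_le_div_iff₀ hc0 (by norm_num)]
        linarith
      have hinv0 : 0 ≤ 1/c := by positivity
      have hq := Qdec hinv0 hinv (by norm_num)
      have hpi := Real.pi_gt_d6
      have hpi0 := Real.pi_pos
      have hN : (0:ℝ) < ((m+1:ℕ):ℝ) := by positivity
      have hQ24 : (1/Real.pi) < (1/2 - (1/c)/6 + (1/c)^2/24 - (1/c)^3/120 + (1/c)^4/720 - (1/c)^5/5040) := by
        have h24 : (1/Real.pi) < (1/2 - (25/24:ℝ)/6 + (25/24:ℝ)^2/24 - (25/24:ℝ)^3/120 + (25/24:ℝ)^4/720 - (25/24:ℝ)^5/5040) := by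
          rw [div_lt_iff₀ hpi0]
          nlinarith
        linarith
      calc ((m+1:ℕ):ℝ)/(2*Real.pi) = (((m+1:ℕ):ℝ)/2) * (1/Real.pi) := by ring
        _ < (((m+1:ℕ):ℝ)/2) * (1/2 - (1/c)/6 + (1/c)^2/24 - (1/c)^3/120 + (1/c)^4/720 - (1/c)^5/5040) := by
          apply mul_lt_mul_of_pos_left hQ24 (by positivity)
end

section
/- Fix n ≥ 1 a natural number and σ² > 0, P > 0. The function τ ↦ 1 − γ(n, nτ/σ²)/Γ(n) + γ(n, nτ/(σ²+P))/Γ(n) defined for τ > 0 attains its minimum at τ* = σ²(σ²+P)/P · ln((σ²+P)/σ²), where γ(n,x) = ∫₀^x e^{-t}t^{n-1}dt is the lower incomplete Gamma function. -/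
open intervalIntegral in
private lemma core_ineq (n : ℕ) {a b : ℝ} (hb : 0 < b) (hab : b < a) (x : ℝ) :
    a ^ n * Real.exp (-(a * x)) ≤ b ^ n * Real.exp (-(b * x)) ↔
      (n : ℝ) * Real.log (a / b) ≤ (a - b) * x := by
  have ha : 0 < a := hb.trans hab
  rw [← Real.log_le_log_iff (by positivity) (by positivity),
    Real.log_mul (by positivity) (Real.exp_ne_zero _),
    Real.log_mul (by positivity) (Real.exp_ne_zero _),
    Real.log_exp, Real.log_exp, Real.log_pow, Real.log_pow,
    Real.log_div ha.ne' hb.ne']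
  constructor <;> intro h <;> nlinarith [h]

private lemma core_ineq' (n : ℕ) {a b : ℝ} (hb : 0 < b) (hab : b < a) (x : ℝ) :
    b ^ n * Real.exp (-(b * x)) ≤ a ^ n * Real.exp (-(a * x)) ↔
      (a - b) * x ≤ (n : ℝ) * Real.log (a / b) := by
  have ha : 0 < a := hb.trans hab
  rw [← Real.log_le_log_iff (by positivity) (by positivity),
    Real.log_mul (by positivity) (Real.exp_ne_zero _),
    Real.log_mul (by positivity) (Real.exp_ne_zero _),
    Real.log_exp, Real.log_exp, Real.log_pow, Real.log_pow,
    Real.log_div ha.ne' hb.ne']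
  constructor <;> intro h <;> nlinarith [h]

theorem stmt_11 (n : ℕ) (hn : 1 ≤ n) (σ2 P : ℝ) (hσ : 0 < σ2) (hP : 0 < P)
    (ξ : ℝ → ℝ)
    (hξ : ∀ τ : ℝ, ξ τ =
      1 - (∫ t in (0 : ℝ)..((n : ℝ) * τ / σ2), Real.exp (-t) * t ^ (n - 1)) / Real.Gamma n +
        (∫ t in (0 : ℝ)..((n : ℝ) * τ / (σ2 + P)), Real.exp (-t) * t ^ (n - 1)) / Real.Gamma n) :
    ∀ τ ∈ Set.Ioi (0 : ℝ),
      ξ (σ2 * (σ2 + P) / P * Real.log ((σ2 + P) / σ2)) ≤ ξ τ := by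
  intro τ hτ
  have hτ0 : (0 : ℝ) < τ := hτ
  have hσP : (0 : ℝ) < σ2 + P := by linarith
  have hn0 : (0 : ℝ) < n := by exact_mod_cast hn
  set g : ℝ → ℝ := fun t => Real.exp (-t) * t ^ (n - 1) with hg
  have hgc : Continuous g := by fun_prop
  set a : ℝ := n / σ2 with ha
  set b : ℝ := n / (σ2 + P) with hb
  have hapos : 0 < a := by positivity
  have hbpos : 0 < b := by positivity
  have hba : b < a := by
    apply div_lt_div_of_pos_left hn0 hσ (by linarith)
  set T : ℝ := σ2 * (σ2 + P) / P * Real.log ((σ2 + P) / σ2) with hT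
  have hlogpos : 0 < Real.log ((σ2 + P) / σ2) :=
    Real.log_pos (by rw [lt_div_iff₀ hσ]; linarith)
  have hT0 : 0 < T := by positivity
  have habr : a / b = (σ2 + P) / σ2 := by
    rw [ha, hb]
    field_simp
  have hkey : (a - b) * T = n * Real.log (a / b) := by
    rw [habr, hT, ha, hb]
    field_simp
    ring
  -- power helper
  have hpow : ∀ c : ℝ, c * c ^ (n - 1) = c ^ n := by
    intro c
    conv_rhs => rw [← Nat.sub_add_cancel hn]
    rw [pow_succ]
    ring
  have hform : ∀ c x : ℝ, c * g (c * x) = c ^ n * Real.exp (-(c * x)) * x ^ (n - 1) := by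
    intro c x
    simp only [hg, mul_pow]
    rw [← hpow c]
    ring
  -- pointwise comparisons
  have hpt_ge : ∀ x : ℝ, 0 ≤ x → T ≤ x → a * g (a * x) ≤ b * g (b * x) := by
    intro x hx hTx
    rw [hform, hform]
    apply mul_le_mul_of_nonneg_right _ (pow_nonneg hx _)
    rw [core_ineq n hbpos hba, ← hkey]
    exact mul_le_mul_of_nonneg_left hTx (by linarith)
  have hpt_le : ∀ x : ℝ, 0 ≤ x → x ≤ T → b * g (b * x) ≤ a * g (a * x) := by
    intro x hx hTx
    rw [hform, hform]
    apply mul_le_mul_of_nonneg_right _ (pow_nonneg hx _)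
    rw [core_ineq' n hbpos hba, ← hkey]
    exact mul_le_mul_of_nonneg_left hTx (by linarith)
  -- integrability
  have hint : ∀ u v : ℝ, IntervalIntegrable g MeasureTheory.volume u v :=
    fun u v => hgc.intervalIntegrable u v
  have hinta : ∀ (c : ℝ) (u v : ℝ),
      IntervalIntegrable (fun x => c * g (c * x)) MeasureTheory.volume u v :=
    fun c u v => (Continuous.intervalIntegrable (by fun_prop) u v)
  -- main integral inequality
  have hmain : (∫ x in T..τ, a * g (a * x)) ≤ ∫ x in T..τ, b * g (b * x) := by
    rcases le_total T τ with h | h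
    · apply intervalIntegral.integral_mono_on h (hinta a T τ) (hinta b T τ)
      intro x hx
      exact hpt_ge x (le_trans hT0.le hx.1) hx.1
    · rw [intervalIntegral.integral_symm, intervalIntegral.integral_symm τ T]
      apply neg_le_neg
      apply intervalIntegral.integral_mono_on h (hinta b τ T) (hinta a τ T)
      intro x hx
      exact hpt_le x (le_trans hτ0.le hx.1) hx.2
  -- change of variables
  have hcov : ∀ c : ℝ, 0 < c →
      (∫ t in c * T..c * τ, g t) = ∫ x in T..τ, c * g (c * x) := by
    intro c hc
    rw [intervalIntegral.integral_const_mul]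
    rw [intervalIntegral.integral_comp_mul_left g hc.ne']
    rw [smul_eq_mul]
    field_simp
  have hsub : ∀ c : ℝ, 0 < c →
      ((∫ t in (0:ℝ)..(c * τ), g t) - ∫ t in (0:ℝ)..(c * T), g t)
        = ∫ t in c * T..c * τ, g t :=
    fun c _ => intervalIntegral.integral_interval_sub_left (hint _ _) (hint _ _)
  have hnum : ((∫ t in (0:ℝ)..(a * τ), g t) - ∫ t in (0:ℝ)..(b * τ), g t)
      ≤ (∫ t in (0:ℝ)..(a * T), g t) - ∫ t in (0:ℝ)..(b * T), g t := by
    have h1 := hsub a hapos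
    have h2 := hsub b hbpos
    have h3 := hcov a hapos
    have h4 := hcov b hbpos
    have : ((∫ t in (0:ℝ)..(a * τ), g t) - ∫ t in (0:ℝ)..(a * T), g t)
        ≤ (∫ t in (0:ℝ)..(b * τ), g t) - ∫ t in (0:ℝ)..(b * T), g t := by
      rw [h1, h2, h3, h4]; exact hmain
    linarith
  -- conclude
  have hΓ : 0 < Real.Gamma n := Real.Gamma_pos_of_pos hn0
  rw [hξ τ, hξ T]
  have e1 : (n : ℝ) * τ / σ2 = a * τ := by rw [ha]; ring
  have e2 : (n : ℝ) * τ / (σ2 + P) = b * τ := by rw [hb]; ring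
  have e3 : (n : ℝ) * T / σ2 = a * T := by rw [ha]; ring
  have e4 : (n : ℝ) * T / (σ2 + P) = b * T := by rw [hb]; ring
  rw [e1, e2, e3, e4]
  have h2 : ((∫ t in (0:ℝ)..(a * τ), g t) - ∫ t in (0:ℝ)..(b * τ), g t) / Real.Gamma n
      ≤ ((∫ t in (0:ℝ)..(a * T), g t) - ∫ t in (0:ℝ)..(b * T), g t) / Real.Gamma n := by
    gcongr
  rw [sub_div, sub_div] at h2
  simp only [hg] at h2 ⊢
  linarith
end

section
/- For σ² > 0, P_a > 0, λ > 0 and natural n ≥ 1, the function x ↦ [1 − (e^{-n}n^n/Γ(n))·ln(1 + x/σ²)]·(1/(P_aλ))·e^{-x/(P_aλ)} integrated over x from 0 to σ²(e^{Γ(n)/(e^{-n}n^n)} − 1) equals 1 − (e^{-n}n^n/Γ(n))·e^{σ²/(P_aλ)}·[E₁(σ²/(P_aλ)) − E₁((σ²/(P_aλ))·e^{Γ(n)/(e^{-n}n^n)})], where E₁(x) = ∫_x^∞ e^{-t}/t dt. -/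
open MeasureTheory Set Real intervalIntegral

noncomputable def expIntE1 (x : ℝ) : ℝ := ∫ t in Set.Ioi x, Real.exp (-t) / t

lemma e1_integrable {s : ℝ} (hs : 0 < s) :
    IntegrableOn (fun t => Real.exp (-t) / t) (Ioi s) := by
  have h1 : IntegrableOn (fun t => s⁻¹ * Real.exp (-1 * t)) (Ioi s) :=
    (exp_neg_integrableOn_Ioi s one_pos).const_mul _
  refine h1.mono' ?_ ?_
  · exact ((Real.measurable_exp.comp measurable_neg).div measurable_id).aestronglyMeasurable
  · filter_upwards [ae_restrict_mem measurableSet_Ioi] with t ht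
    have ht' : s < t := ht
    have h0 : (0:ℝ) < t := hs.trans ht'
    rw [Real.norm_eq_abs, abs_div, abs_of_pos (Real.exp_pos _), abs_of_pos h0]
    rw [neg_one_mul]
    calc Real.exp (-t) / t ≤ Real.exp (-t) / s :=
          div_le_div_of_nonneg_left (Real.exp_pos _).le hs ht'.le
      _ = s⁻¹ * Real.exp (-t) := by ring

lemma e1_sub {s s' : ℝ} (hs : 0 < s) (hss : s ≤ s') :
    expIntE1 s - expIntE1 s' = ∫ t in s..s', Real.exp (-t) / t := by
  have hs' : 0 < s' := hs.trans_le hss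
  have hsplit : (Ioc s s') ∪ (Ioi s') = Ioi s := Ioc_union_Ioi_eq_Ioi hss
  have h1 : expIntE1 s = (∫ t in Ioc s s', Real.exp (-t) / t) + ∫ t in Ioi s', Real.exp (-t) / t := by
    rw [expIntE1, ← hsplit, setIntegral_union (Ioc_disjoint_Ioi le_rfl) measurableSet_Ioi
      ((e1_integrable hs).mono_set Ioc_subset_Ioi_self) (e1_integrable hs')]
  rw [intervalIntegral.integral_of_le hss, h1, expIntE1]
  ring

lemma subst_lemma {b c U : ℝ} (hb : 0 < b) (hc : 0 < c) :
    (∫ x in (0:ℝ)..U, Real.exp (-x/b) / (c + x))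
      = Real.exp (c/b) * ∫ t in (c/b)..((U+c)/b), Real.exp (-t) / t := by
  have key : ∀ x : ℝ, Real.exp (-x/b) / (c + x)
      = (Real.exp (c/b) / b) * ((fun t => Real.exp (-t) / t) ((x + c) / b)) := by
    intro x
    by_cases hx : c + x = 0
    · have : x + c = 0 := by linarith
      simp [hx, this]
    · simp only
      have hxc : x + c ≠ 0 := by rw [add_comm]; exact hx
      have he : Real.exp (-x/b) = Real.exp (c/b) * Real.exp (-((x+c)/b)) := by
        rw [← Real.exp_add]; congr 1; ring
      rw [he]
      field_simp
      ring
  calc (∫ x in (0:ℝ)..U, Real.exp (-x/b) / (c + x))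
      = ∫ x in (0:ℝ)..U, (Real.exp (c/b) / b) * ((fun t => Real.exp (-t) / t) ((x + c) / b)) := by
        simp_rw [key]
    _ = (Real.exp (c/b) / b) * ∫ x in (0:ℝ)..U, (fun t => Real.exp (-t) / t) ((x + c) / b) :=
        intervalIntegral.integral_const_mul _ _
    _ = (Real.exp (c/b) / b) * ∫ x in (0+c)..(U+c), (fun t => Real.exp (-t) / t) (x / b) := by
        rw [intervalIntegral.integral_comp_add_right (fun y => (fun t => Real.exp (-t) / t) (y / b)) c]
    _ = Real.exp (c/b) * ∫ t in (c/b)..((U+c)/b), Real.exp (-t) / t := by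
        rw [intervalIntegral.integral_comp_div (fun t => Real.exp (-t) / t) hb.ne', zero_add,
          smul_eq_mul]
        field_simp

lemma main_lemma (a b c : ℝ) (ha : 0 < a) (hb : 0 < b) (hc : 0 < c) :
    (∫ x in (0:ℝ)..(c * (Real.exp (1/a) - 1)),
        (1 - a * Real.log (1 + x / c)) * (1 / b) * Real.exp (-x / b))
      = 1 - a * Real.exp (c / b) *
          (expIntE1 (c / b) - expIntE1 (c / b * Real.exp (1 / a))) := by
  set U : ℝ := c * (Real.exp (1/a) - 1) with hU
  have hUpos : 0 ≤ U := by
    have : (1:ℝ) ≤ Real.exp (1/a) := Real.one_le_exp (by positivity)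
    nlinarith
  set F : ℝ → ℝ := fun x => -((1 - a * Real.log (1 + x / c)) * Real.exp (-x / b)) with hF
  -- derivative
  have hderiv : ∀ x ∈ uIcc (0:ℝ) U, HasDerivAt F
      ((1 - a * Real.log (1 + x / c)) * (1 / b) * Real.exp (-x / b)
        + a * (Real.exp (-x / b) / (c + x))) x := by
    intro x hx
    rw [uIcc_of_le hUpos, mem_Icc] at hx
    obtain ⟨hx0, hx1⟩ := hx
    have hcx : 0 < c + x := by linarith
    have h1x : 0 < 1 + x / c := by positivity
    have hlog : HasDerivAt (fun x : ℝ => Real.log (1 + x / c)) ((c + x)⁻¹) x := by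
      have h1 : HasDerivAt (fun x : ℝ => 1 + x / c) (1/c) x := by
        simpa using ((hasDerivAt_id x).div_const c).const_add 1
      have h2 := (Real.hasDerivAt_log h1x.ne').comp x h1
      refine h2.congr_deriv ?_
      field_simp
    have hexp : HasDerivAt (fun x : ℝ => Real.exp (-x / b)) (-(1/b) * Real.exp (-x/b)) x := by
      have h1 : HasDerivAt (fun x : ℝ => -x / b) (-(1/b)) x := by
        simpa [neg_div] using ((hasDerivAt_id x).neg.div_const b)
      simpa [mul_comm] using h1.exp
    have hmul : HasDerivAt (fun x => (1 - a * Real.log (1 + x / c)) * Real.exp (-x / b))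
        ((-(a * (c + x)⁻¹)) * Real.exp (-x/b)
          + (1 - a * Real.log (1 + x / c)) * (-(1/b) * Real.exp (-x/b))) x :=
      (((hlog.const_mul a).const_sub 1)).mul hexp
    have := hmul.neg
    refine this.congr_deriv ?_
    rw [div_eq_mul_inv]
    ring
  have hcont1 : ContinuousOn (fun x => (1 - a * Real.log (1 + x / c)) * (1 / b) * Real.exp (-x / b))
      (uIcc (0:ℝ) U) := by
    rw [uIcc_of_le hUpos]
    apply ContinuousOn.mul
    apply ContinuousOn.mul
    · apply ContinuousOn.sub continuousOn_const
      apply ContinuousOn.mul continuousOn_const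
      apply ContinuousOn.log
      · fun_prop
      · intro x hx; rw [mem_Icc] at hx; obtain ⟨h1, h2⟩ := hx; positivity
    · exact continuousOn_const
    · fun_prop
  have hcont2 : ContinuousOn (fun x => a * (Real.exp (-x / b) / (c + x))) (uIcc (0:ℝ) U) := by
    rw [uIcc_of_le hUpos]
    apply ContinuousOn.mul continuousOn_const
    apply ContinuousOn.div
    · fun_prop
    · fun_prop
    · intro x hx; rw [mem_Icc] at hx; obtain ⟨h1, h2⟩ := hx; positivity
  have hint1 : IntervalIntegrable (fun x => (1 - a * Real.log (1 + x / c)) * (1 / b) * Real.exp (-x / b)) volume 0 U :=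
    hcont1.intervalIntegrable
  have hint2 : IntervalIntegrable (fun x => a * (Real.exp (-x / b) / (c + x))) volume 0 U :=
    hcont2.intervalIntegrable
  have hFTC := intervalIntegral.integral_eq_sub_of_hasDerivAt hderiv (hint1.add hint2)
  rw [intervalIntegral.integral_add hint1 hint2] at hFTC
  have hFU : F U = 0 := by
    have h1 : 1 + U / c = Real.exp (1/a) := by rw [hU]; field_simp; ring
    rw [hF]
    simp only
    rw [h1, Real.log_exp]
    field_simp
    ring
  have hF0 : F 0 = -1 := by simp [hF]
  have hsub : (∫ x in (0:ℝ)..U, a * (Real.exp (-x / b) / (c + x)))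
      = a * Real.exp (c/b) * (expIntE1 (c/b) - expIntE1 (c/b * Real.exp (1/a))) := by
    rw [intervalIntegral.integral_const_mul, subst_lemma hb hc]
    have hcb : 0 < c / b := by positivity
    have hle : c / b ≤ (U + c) / b := by
      gcongr
      linarith
    rw [← e1_sub hcb hle]
    have : (U + c) / b = c / b * Real.exp (1/a) := by
      rw [hU]; field_simp; ring
    rw [this, mul_assoc]
  have : (∫ x in (0:ℝ)..U, (1 - a * Real.log (1 + x / c)) * (1 / b) * Real.exp (-x / b))
      = F U - F 0 - ∫ x in (0:ℝ)..U, a * (Real.exp (-x / b) / (c + x)) := by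
    linarith [hFTC]
  rw [this, hFU, hF0, hsub]
  ring

theorem stmt_16 (σ2 Pa lam : ℝ) (hσ : 0 < σ2) (hPa : 0 < Pa) (hlam : 0 < lam)
    (n : ℕ) (hn : 1 ≤ n) :
    (∫ x in (0 : ℝ)..(σ2 * (Real.exp (Real.Gamma n / (Real.exp (-(n : ℝ)) * (n : ℝ) ^ n)) - 1)),
        (1 - (Real.exp (-(n : ℝ)) * (n : ℝ) ^ n / Real.Gamma n) * Real.log (1 + x / σ2)) *
          (1 / (Pa * lam)) * Real.exp (-x / (Pa * lam))) =
      1 - (Real.exp (-(n : ℝ)) * (n : ℝ) ^ n / Real.Gamma n) * Real.exp (σ2 / (Pa * lam)) *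
        (expIntE1 (σ2 / (Pa * lam)) -
          expIntE1 (σ2 / (Pa * lam) *
            Real.exp (Real.Gamma n / (Real.exp (-(n : ℝ)) * (n : ℝ) ^ n)))) := by
  have hnpos : (0:ℝ) < (n:ℝ) := by exact_mod_cast hn
  have hΓ : 0 < Real.Gamma n := Real.Gamma_pos_of_pos hnpos
  set a : ℝ := Real.exp (-(n : ℝ)) * (n : ℝ) ^ n / Real.Gamma n with ha
  have hapos : 0 < a := by
    apply div_pos _ hΓ
    positivity
  have hinv : Real.Gamma n / (Real.exp (-(n : ℝ)) * (n : ℝ) ^ n) = 1 / a := by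
    rw [ha, one_div_div]
  rw [hinv]
  exact main_lemma a (Pa * lam) σ2 hapos (by positivity) hσ
end

section
/- Let σ² > 0, P_a > 0, λ > 0 and n ≥ 1 natural. The map P_a ↦ 1 − (e^{-n}n^n/Γ(n))·e^{σ²/(P_aλ)}·[E₁(σ²/(P_aλ)) − E₁((σ²/(P_aλ))·K)] with K = e^{Γ(n)/(e^{-n}n^n)} is strictly decreasing in P_a on (0, ∞). -/
open MeasureTheory Set intervalIntegral Real

lemma integrableOn_E1 {x : ℝ} (hx : 0 < x) :
    IntegrableOn (fun t => Real.exp (-t) / t) (Set.Ioi x) := by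
  have hmeas : AEStronglyMeasurable (fun t => Real.exp (-t) / t)
      (volume.restrict (Set.Ioi x)) :=
    ((Real.measurable_exp.comp measurable_neg).div measurable_id).aestronglyMeasurable
  have hg : IntegrableOn (fun t => x⁻¹ * Real.exp (-t)) (Set.Ioi x) := by
    have := exp_neg_integrableOn_Ioi x (b := 1) one_pos
    simpa [IntegrableOn] using this.const_mul x⁻¹
  refine Integrable.mono' hg hmeas ?_
  filter_upwards [ae_restrict_mem measurableSet_Ioi] with t ht
  have htpos : 0 < t := hx.trans ht
  rw [Real.norm_eq_abs, abs_div, abs_of_pos (Real.exp_pos _), abs_of_pos htpos,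
    div_eq_inv_mul]
  exact mul_le_mul_of_nonneg_right (by
    rw [inv_le_inv₀ htpos hx]; exact le_of_lt ht) (Real.exp_pos _).le

lemma E1_sub {x K : ℝ} (hx : 0 < x) (hK : 1 ≤ K) :
    expIntE1 x - expIntE1 (x * K) = ∫ t in x..(x * K), Real.exp (-t) / t := by
  have hxK : x ≤ x * K := le_mul_of_one_le_right hx.le hK
  have hsplit : (∫ t in Set.Ioc x (x*K), Real.exp (-t) / t)
      + (∫ t in Set.Ioi (x*K), Real.exp (-t) / t)
      = ∫ t in Set.Ioi x, Real.exp (-t) / t := by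
    rw [← setIntegral_union (Set.Ioc_disjoint_Ioi le_rfl) measurableSet_Ioi
      ((integrableOn_E1 hx).mono_set Set.Ioc_subset_Ioi_self)
      ((integrableOn_E1 hx).mono_set (Set.Ioi_subset_Ioi hxK)),
      Set.Ioc_union_Ioi_eq_Ioi hxK]
  rw [intervalIntegral.integral_of_le hxK]
  unfold expIntE1
  linarith [hsplit]

lemma g_repr {x K : ℝ} (hx : 0 < x) (hK : 1 ≤ K) :
    Real.exp x * (expIntE1 x - expIntE1 (x * K))
      = ∫ u in (1:ℝ)..K, Real.exp (x * (1 - u)) / u := by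
  rw [E1_sub hx hK]
  have h1 : (∫ u in (1:ℝ)..K, Real.exp (-(x * u)) / (x * u))
      = x⁻¹ • ∫ t in (x*1)..(x*K), Real.exp (-t) / t :=
    intervalIntegral.integral_comp_mul_left (fun t => Real.exp (-t) / t) hx.ne'
  have h2 : (∫ u in (1:ℝ)..K, Real.exp (x * (1 - u)) / u)
      = ∫ u in (1:ℝ)..K, (Real.exp x * x) * (Real.exp (-(x * u)) / (x * u)) := by
    apply intervalIntegral.integral_congr
    intro u hu
    dsimp only
    have hu1 : (1:ℝ) ≤ u := by
      rcases Set.mem_uIcc.1 hu with h | h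
      · exact h.1
      · linarith [h.2, hK]
    have hu0 : (0:ℝ) < u := lt_of_lt_of_le one_pos hu1
    rw [mul_sub, mul_one, sub_eq_add_neg, Real.exp_add]
    field_simp
  rw [h2, intervalIntegral.integral_const_mul, h1, smul_eq_mul]
  rw [mul_one] at *
  field_simp

lemma g_strictAnti {K : ℝ} (hK : 1 < K) :
    StrictAntiOn (fun x => Real.exp x * (expIntE1 x - expIntE1 (x * K)))
      (Set.Ioi 0) := by
  intro x1 hx1 x2 hx2 hlt
  simp only [Set.mem_Ioi] at hx1 hx2
  dsimp only
  rw [g_repr hx1 hK.le, g_repr hx2 hK.le]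
  refine intervalIntegral.integral_lt_integral_of_continuousOn_of_le_of_exists_lt hK
    ?_ ?_ ?_ ?_
  · apply ContinuousOn.div (by fun_prop) continuousOn_id
    intro u hu; exact (lt_of_lt_of_le one_pos hu.1).ne'
  · apply ContinuousOn.div (by fun_prop) continuousOn_id
    intro u hu; exact (lt_of_lt_of_le one_pos hu.1).ne'
  · intro u hu
    have hu0 : (0:ℝ) < u := lt_of_le_of_lt zero_le_one hu.1
    apply div_le_div_of_nonneg_right _ hu0.le
    apply Real.exp_le_exp.2
    nlinarith [hu.1]
  · refine ⟨K, ⟨hK.le, le_rfl⟩, ?_⟩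
    have hK0 : (0:ℝ) < K := lt_trans one_pos hK
    apply div_lt_div_of_pos_right _ hK0
    apply Real.exp_lt_exp.2
    nlinarith

theorem stmt_19 (σ2 lam : ℝ) (hσ : 0 < σ2) (hlam : 0 < lam) (n : ℕ) (hn : 1 ≤ n) :
    StrictAntiOn (fun Pa : ℝ =>
        1 - (Real.exp (-(n : ℝ)) * (n : ℝ) ^ n / Real.Gamma n) *
          Real.exp (σ2 / (Pa * lam)) *
          (expIntE1 (σ2 / (Pa * lam)) -
            expIntE1 (σ2 / (Pa * lam) *
              Real.exp (Real.Gamma n / (Real.exp (-(n : ℝ)) * (n : ℝ) ^ n)))))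
      (Set.Ioi 0) := by
  have hnpos : (0:ℝ) < (n:ℝ) := by exact_mod_cast hn
  have hΓ : 0 < Real.Gamma n := Real.Gamma_pos_of_pos hnpos
  set c : ℝ := Real.exp (-(n : ℝ)) * (n : ℝ) ^ n / Real.Gamma n with hc
  have hcpos : 0 < c := div_pos (mul_pos (Real.exp_pos _) (pow_pos hnpos n)) hΓ
  set K : ℝ := Real.exp (Real.Gamma n / (Real.exp (-(n : ℝ)) * (n : ℝ) ^ n)) with hKdef
  have hK : 1 < K := by
    rw [hKdef, ← Real.exp_zero]
    apply Real.exp_lt_exp.2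
    exact div_pos hΓ (mul_pos (Real.exp_pos _) (pow_pos hnpos n))
  intro p1 hp1 p2 hp2 hlt
  simp only [Set.mem_Ioi] at hp1 hp2
  have hx1 : 0 < σ2 / (p1 * lam) := div_pos hσ (mul_pos hp1 hlam)
  have hx2 : 0 < σ2 / (p2 * lam) := div_pos hσ (mul_pos hp2 hlam)
  have hxlt : σ2 / (p2 * lam) < σ2 / (p1 * lam) := by
    apply div_lt_div_of_pos_left hσ (mul_pos hp1 hlam)
    exact mul_lt_mul_of_pos_right hlt hlam
  have hg := g_strictAnti hK hx2 hx1 hxlt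
  simp only at hg
  have : c * (Real.exp (σ2 / (p1 * lam)) *
      (expIntE1 (σ2 / (p1 * lam)) - expIntE1 (σ2 / (p1 * lam) * K)))
      < c * (Real.exp (σ2 / (p2 * lam)) *
      (expIntE1 (σ2 / (p2 * lam)) - expIntE1 (σ2 / (p2 * lam) * K))) :=
    mul_lt_mul_of_pos_left hg hcpos
  simp only []
  nlinarith [this]
end
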